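/- arXiv:1403.0669 — 6 statements merged into one kernel-verified Lean document; each statement's English description precedes it below -/
import Mathlib

section
/- Let μ be a compactly supported Borel probability measure on ℝ and Λ ⊂ ℝ a countable set. Then {e^{-2πiλx} : λ ∈ Λ} is an orthonormal basis of L²(μ) if and only if Q(ξ) := ∑_{λ∈Λ} |μ̂(ξ+λ)|² = 1 for all ξ ∈ ℝ. -/
open MeasureTheory Complex Real
open scoped ENNReal

/-- The Fourier transform `μ̂(ξ) = ∫ e^{-2πiξx} dμ(x)`. -/
noncomputable def FT (μ : Measure ℝ) (ξ : ℝ) : ℂ :=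
  ∫ x, Complex.exp (-2 * Real.pi * Complex.I * ξ * x) ∂μ

/-- The family of exponentials `e_λ, λ ∈ Λ`, is orthonormal in `L²(μ)`:
equivalently `μ̂(λ - λ') = δ_{λλ'}`. -/
def ExpOrthonormal (μ : Measure ℝ) (Λ : Set ℝ) : Prop :=
  ∀ l ∈ Λ, ∀ l' ∈ Λ, FT μ (l - l') = if l = l' then 1 else 0

/-- The family of exponentials `e_λ, λ ∈ Λ` is total in `L²(μ)`: any `f ∈ L²(μ)`
orthogonal to all of them vanishes. Together with orthonormality this says the
family is a maximal orthonormal set, i.e. an orthonormal basis of `L²(μ)`. -/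
def ExpTotal (μ : Measure ℝ) (Λ : Set ℝ) : Prop :=
  ∀ f : Lp ℂ 2 μ,
    (∀ l ∈ Λ, ∫ x, f x *
      (starRingEnd ℂ) (Complex.exp (-2 * Real.pi * Complex.I * l * x)) ∂μ = 0) → f = 0

/-!
Write `e_ξ ∈ L²(μ)` for `x ↦ e^{-2πiξx}`. Then `⟪e_λ, e_ξ⟫ = μ̂(ξ - λ)`, so `Q(ξ)` is the Bessel sum
`∑_λ |⟪e_λ, e_{-ξ}⟫|²` of the unit vector `e_{-ξ}`. If the `e_λ` form an orthonormal basis,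
Parseval gives `Q ≡ 1`. Conversely, in `Q(-λ') = 1` the term `λ = λ'` already equals `|μ̂(0)|² = 1`,
which forces `μ̂(λ - λ') = 0` for `λ ≠ λ'`; and equality in Bessel's inequality puts every `e_ξ` in
the closed span of the `e_λ`. Since `μ` lives on a compact set `K`, Stone–Weierstrass on `C(K, ℂ)`
makes the family of all `e_ξ` total in `L²(μ)`, hence so is the family of the `e_λ`.
-/

open Set Submodule
open scoped InnerProductSpace BoundedContinuousFunction ComplexConjugate

section HilbertSpace

variable {𝕜 E ι α : Type*} [RCLike 𝕜] [NormedAddCommGroup E] [InnerProductSpace 𝕜 E]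

theorem HilbertBasis.tsum_norm_inner_sq [CompleteSpace E] (b : HilbertBasis ι 𝕜 E) (x : E) :
    ∑' i, ‖⟪b i, x⟫_𝕜‖ ^ 2 = ‖x‖ ^ 2 := by
  have := lp.norm_rpow_eq_tsum (p := 2) (by norm_num) (b.repr x)
  simpa only [ENNReal.toReal_ofNat, Real.rpow_two, b.repr_apply_apply,
    LinearIsometryEquiv.norm_map] using this.symm

theorem Orthonormal.mem_topologicalClosure_span_of_tsum_norm_inner_sq_eq [CompleteSpace E]
    {v : ι → E} (hv : Orthonormal 𝕜 v) {x : E} (hx : ∑' i, ‖⟪v i, x⟫_𝕜‖ ^ 2 = ‖x‖ ^ 2) :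
    x ∈ (span 𝕜 (range v)).topologicalClosure := by
  set V := (span 𝕜 (range v)).topologicalClosure
  have : CompleteSpace V := (isClosed_topologicalClosure _).completeSpace_coe
  have hvV : ∀ i, V.starProjection (v i) = v i := fun i =>
    V.starProjection_eq_self_iff.mpr (le_topologicalClosure _ (subset_span ⟨i, rfl⟩))
  have hinner : ∀ i, ⟪v i, x⟫_𝕜 = ⟪v i, V.starProjection x⟫_𝕜 := fun i => by
    rw [← V.inner_starProjection_left_eq_right, hvV]
  have hle : ‖x‖ ^ 2 ≤ ‖V.starProjection x‖ ^ 2 := by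
    simpa only [← hx, ← hinner] using hv.tsum_inner_products_le (V.starProjection x)
  refine (V.mem_iff_norm_starProjection x).mpr (le_antisymm (V.norm_starProjection_apply_le x) ?_)
  exact pow_le_pow_iff_left₀ (norm_nonneg _) (norm_nonneg _) two_ne_zero |>.mp hle

theorem orthonormal_of_tsum_norm_inner_sq_eq_one {v : ι → E} (hv : ∀ i, ‖v i‖ = 1)
    (h : ∀ j, ∑' i, ‖⟪v i, v j⟫_𝕜‖ ^ 2 = 1) : Orthonormal 𝕜 v := by
  classical
  refine ⟨hv, fun i j hij => ?_⟩
  have hjj : ‖⟪v j, v j⟫_𝕜‖ ^ 2 = 1 := by simp [hv j]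
  have hsum : Summable fun k => ‖⟪v k, v j⟫_𝕜‖ ^ 2 :=
    by_contra fun hs => by simpa [tsum_eq_zero_of_not_summable hs] using h j
  have hpair := hsum.sum_le_tsum {i, j} (fun k _ => by positivity)
  rw [Finset.sum_pair hij, h j, hjj] at hpair
  exact norm_eq_zero.mp <|
    pow_eq_zero_iff two_ne_zero |>.mp (le_antisymm (by linarith) (by positivity))

theorem orthonormal_and_dense_iff_tsum_norm_inner_sq_eq_one [CompleteSpace E] {u : α → E}
    (hu : ∀ a, ‖u a‖ = 1) (hdense : (span 𝕜 (range u)).topologicalClosure = ⊤) {v : ι → E}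
    (hvu : range v ⊆ range u) :
    (Orthonormal 𝕜 v ∧ (span 𝕜 (range v)).topologicalClosure = ⊤) ↔
      ∀ a, ∑' i, ‖⟪v i, u a⟫_𝕜‖ ^ 2 = 1 := by
  constructor
  · rintro ⟨hv, hvdense⟩ a
    have := (HilbertBasis.mk hv hvdense.ge).tsum_norm_inner_sq (u a)
    rwa [HilbertBasis.coe_mk, hu, one_pow] at this
  · intro h
    have hv : Orthonormal 𝕜 v := by
      refine orthonormal_of_tsum_norm_inner_sq_eq_one (fun i => ?_) (fun j => ?_)
      · obtain ⟨a, ha⟩ := hvu ⟨i, rfl⟩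
        rw [← ha, hu]
      · obtain ⟨a, ha⟩ := hvu ⟨j, rfl⟩
        rw [← ha, h]
    refine ⟨hv, eq_top_iff.mpr ?_⟩
    rw [← hdense]
    refine topologicalClosure_minimal _ (span_le.mpr ?_) (isClosed_topologicalClosure _)
    rintro _ ⟨a, rfl⟩
    exact hv.mem_topologicalClosure_span_of_tsum_norm_inner_sq_eq (by rw [h, hu, one_pow])

end HilbertSpace

section Restriction

variable {X : Type*} [TopologicalSpace X] (K : Set X)

noncomputable def bcfRestrict : (X →ᵇ ℂ) →⋆ₐ[ℂ] C(K, ℂ) :=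
  (ContinuousMap.compStarAlgHom' ℂ ℂ ⟨Subtype.val, continuous_subtype_val⟩).comp
    (BoundedContinuousFunction.toContinuousMapStarₐ ℂ)

variable [MeasurableSpace X] [BorelSpace X] (μ : Measure X) [IsProbabilityMeasure μ]
  {K} [CompactSpace K]

theorem norm_toLp_le_norm_bcfRestrict (hμK : μ Kᶜ = 0) (g : X →ᵇ ℂ) :
    ‖BoundedContinuousFunction.toLp 2 μ ℂ g‖ ≤ ‖bcfRestrict K g‖ := by
  have hK : ∀ᵐ x ∂μ, x ∈ K := mem_ae_iff.mpr hμK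
  have hbound : ∀ᵐ x ∂μ, ‖BoundedContinuousFunction.toLp 2 μ ℂ g x‖ ≤ ‖bcfRestrict K g‖ := by
    filter_upwards [BoundedContinuousFunction.coeFn_toLp 2 μ ℂ g, hK] with x hx hxK
    rw [hx]
    exact (bcfRestrict K g).norm_coe_le_norm ⟨x, hxK⟩
  simpa [measureUnivNNReal] using Lp.norm_le_of_ae_bound (norm_nonneg _) hbound

theorem toLp_mem_closure_image_of_dense (hμK : μ Kᶜ = 0) {s : Set (X →ᵇ ℂ)}
    (hs : Dense (bcfRestrict K '' s)) (g : X →ᵇ ℂ) :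
    BoundedContinuousFunction.toLp 2 μ ℂ g ∈
      closure (BoundedContinuousFunction.toLp 2 μ ℂ '' s) := by
  refine Metric.mem_closure_iff.mpr fun ε hε => ?_
  obtain ⟨_, ⟨q, hq, rfl⟩, hdist⟩ := Metric.mem_closure_iff.mp (hs (bcfRestrict K g)) ε hε
  refine ⟨_, ⟨q, hq, rfl⟩, ?_⟩
  rw [dist_eq_norm, ← map_sub]
  calc _ ≤ ‖bcfRestrict K (g - q)‖ := norm_toLp_le_norm_bcfRestrict μ hμK (g - q)
    _ = dist (bcfRestrict K g) (bcfRestrict K q) := by rw [map_sub, dist_eq_norm]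
    _ < ε := hdist

end Restriction

noncomputable def fourierExp (ξ x : ℝ) : ℂ := Complex.exp (-2 * π * I * ξ * x)

theorem fourierExp_add (a b x : ℝ) : fourierExp (a + b) x = fourierExp a x * fourierExp b x := by
  rw [fourierExp, fourierExp, fourierExp, ← Complex.exp_add]
  push_cast
  ring_nf

theorem fourierExp_zero (x : ℝ) : fourierExp 0 x = 1 := by
  simp [fourierExp]

theorem conj_fourierExp (ξ x : ℝ) : conj (fourierExp ξ x) = fourierExp (-ξ) x := by
  rw [fourierExp, fourierExp, ← Complex.exp_conj]
  simp only [map_mul, map_neg, map_ofNat, conj_I, conj_ofReal, ofReal_neg]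
  ring_nf

theorem norm_fourierExp (ξ x : ℝ) : ‖fourierExp ξ x‖ = 1 := by
  rw [fourierExp, show -2 * (π : ℂ) * I * ξ * x = ((-2 * π * ξ * x : ℝ) : ℂ) * I by push_cast; ring,
    norm_exp_ofReal_mul_I]

theorem continuous_fourierExp (ξ : ℝ) : Continuous (fourierExp ξ) := by
  unfold fourierExp
  fun_prop

theorem exists_fourierExp_ne {x y : ℝ} (hxy : x ≠ y) : ∃ ξ, fourierExp ξ x ≠ fourierExp ξ y := by
  refine ⟨(2 * (x - y))⁻¹, fun h => ?_⟩
  have hsub : (x : ℂ) - y ≠ 0 := sub_ne_zero.mpr (ofReal_injective.ne hxy)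
  have hhalf : fourierExp (2 * (x - y))⁻¹ x = -fourierExp (2 * (x - y))⁻¹ y := by
    have hexp : -2 * π * I * ((2 * (x - y))⁻¹ : ℝ) * x
        = -(π * I) + -2 * π * I * ((2 * (x - y))⁻¹ : ℝ) * y := by
      push_cast
      field_simp
      ring
    rw [fourierExp, fourierExp, hexp, Complex.exp_add, Complex.exp_neg, Complex.exp_pi_mul_I]
    ring
  have h0 : fourierExp (2 * (x - y))⁻¹ y = 0 := by
    linear_combination (hhalf - h) / 2
  have h1 := norm_fourierExp (2 * (x - y))⁻¹ y
  rw [h0, norm_zero] at h1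
  exact zero_ne_one h1

theorem FT_zero (μ : Measure ℝ) [IsProbabilityMeasure μ] : FT μ 0 = 1 := by
  simp [FT]

theorem FT_neg (μ : Measure ℝ) (ξ : ℝ) : FT μ (-ξ) = conj (FT μ ξ) := by
  simp_rw [FT, ← integral_conj]
  exact integral_congr_ae (Filter.Eventually.of_forall fun x => (conj_fourierExp ξ x).symm)

noncomputable def expBCF (ξ : ℝ) : ℝ →ᵇ ℂ :=
  .ofNormedAddCommGroup (fourierExp ξ) (continuous_fourierExp ξ) 1
    fun x => (norm_fourierExp ξ x).le

theorem expBCF_add (a b : ℝ) : expBCF (a + b) = expBCF a * expBCF b :=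
  BoundedContinuousFunction.ext fun x => fourierExp_add a b x

theorem expBCF_zero : expBCF 0 = 1 :=
  BoundedContinuousFunction.ext fourierExp_zero

theorem star_expBCF (ξ : ℝ) : star (expBCF ξ) = expBCF (-ξ) :=
  BoundedContinuousFunction.ext fun x => conj_fourierExp ξ x

section Lp

variable (μ : Measure ℝ)

noncomputable def expLp [IsFiniteMeasure μ] (ξ : ℝ) : Lp ℂ 2 μ :=
  BoundedContinuousFunction.toLp 2 μ ℂ (expBCF ξ)

theorem coeFn_expLp [IsFiniteMeasure μ] (ξ : ℝ) : expLp μ ξ =ᵐ[μ] fourierExp ξ :=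
  BoundedContinuousFunction.coeFn_toLp 2 μ ℂ (expBCF ξ)

theorem inner_expLp_eq_integral [IsFiniteMeasure μ] (ξ : ℝ) (f : Lp ℂ 2 μ) :
    ⟪expLp μ ξ, f⟫_ℂ = ∫ x, f x * conj (fourierExp ξ x) ∂μ := by
  rw [L2.inner_def]
  refine integral_congr_ae ?_
  filter_upwards [coeFn_expLp μ ξ] with x hx
  rw [RCLike.inner_apply, hx]

theorem inner_expLp_expLp [IsFiniteMeasure μ] (a b : ℝ) :
    ⟪expLp μ a, expLp μ b⟫_ℂ = FT μ (b - a) := by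
  rw [inner_expLp_eq_integral, FT]
  refine integral_congr_ae ?_
  filter_upwards [coeFn_expLp μ b] with x hx
  rw [hx, conj_fourierExp, ← fourierExp_add, sub_eq_add_neg]
  rfl

theorem norm_expLp [IsProbabilityMeasure μ] (ξ : ℝ) : ‖expLp μ ξ‖ = 1 := by
  have hsq : ‖expLp μ ξ‖ ^ 2 = 1 := by
    rw [← inner_self_eq_norm_sq (𝕜 := ℂ), inner_expLp_expLp, sub_self, FT_zero, RCLike.one_re]
  exact (pow_eq_one_iff_of_nonneg (norm_nonneg _) two_ne_zero).mp hsq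

theorem norm_inner_expLp_expLp_neg [IsFiniteMeasure μ] (ξ l : ℝ) :
    ‖⟪expLp μ l, expLp μ (-ξ)⟫_ℂ‖ = ‖FT μ (ξ + l)‖ := by
  rw [inner_expLp_expLp, show -ξ - l = -(ξ + l) by ring, FT_neg, Complex.norm_conj]

theorem expOrthonormal_iff [IsFiniteMeasure μ] (Λ : Set ℝ) :
    ExpOrthonormal μ Λ ↔ Orthonormal ℂ (fun l : Λ => expLp μ l) := by
  classical
  simp only [orthonormal_iff_ite, inner_expLp_expLp, Subtype.forall, Subtype.mk.injEq]
  exact ⟨fun h a ha b hb => by simp [h b hb a ha, eq_comm],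
    fun h a ha b hb => by simp [h b hb a ha, eq_comm]⟩

theorem expTotal_iff [IsFiniteMeasure μ] (Λ : Set ℝ) :
    ExpTotal μ Λ ↔ (span ℂ (range fun l : Λ => expLp μ l)).topologicalClosure = ⊤ := by
  rw [topologicalClosure_eq_top_iff, eq_bot_iff]
  refine forall_congr' fun f => ?_
  rw [mem_bot, ← span_singleton_le_iff_mem, ← isOrtho_iff_le, isOrtho_comm, isOrtho_span]
  simp only [forall_mem_range, mem_singleton_iff, forall_eq, Subtype.forall,
    inner_expLp_eq_integral]
  rfl

end Lp

noncomputable def expSubalgebra : StarSubalgebra ℂ (ℝ →ᵇ ℂ) where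
  toSubalgebra := Algebra.adjoin ℂ (range expBCF)
  star_mem' := by
    change Algebra.adjoin ℂ (range expBCF) ≤ star (Algebra.adjoin ℂ (range expBCF))
    refine Algebra.adjoin_le ?_
    rintro - ⟨ξ, rfl⟩
    exact Algebra.subset_adjoin ⟨-ξ, (star_expBCF ξ).symm⟩

theorem expSubalgebra_toSubmodule :
    Subalgebra.toSubmodule expSubalgebra.toSubalgebra = span ℂ (range expBCF) := by
  apply Algebra.adjoin_eq_span_of_subset
  refine Subset.trans ?_ subset_span
  intro g hg
  refine Submonoid.closure_induction (fun _ => id) ⟨0, expBCF_zero⟩ ?_ hg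
  rintro - - - - ⟨a, rfl⟩ ⟨b, rfl⟩
  exact ⟨a + b, expBCF_add a b⟩

theorem dense_bcfRestrict_image_expSubalgebra (K : Set ℝ) [CompactSpace K] :
    Dense (bcfRestrict K '' expSubalgebra) := by
  have hsep : (expSubalgebra.map (bcfRestrict K)).SeparatesPoints := by
    intro x y hxy
    obtain ⟨ξ, hξ⟩ := exists_fourierExp_ne (Subtype.coe_injective.ne hxy)
    exact ⟨_, ⟨bcfRestrict K (expBCF ξ), ⟨expBCF ξ, Algebra.subset_adjoin ⟨ξ, rfl⟩, rfl⟩, rfl⟩, hξ⟩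
  rw [← StarSubalgebra.coe_map, dense_iff_closure_eq, ← StarSubalgebra.topologicalClosure_coe,
    ContinuousMap.starSubalgebra_topologicalClosure_eq_top_of_separatesPoints _ hsep]
  rfl

theorem topologicalClosure_span_expLp_eq_top (μ : Measure ℝ) [IsProbabilityMeasure μ] {K : Set ℝ}
    (hK : IsCompact K) (hμK : μ Kᶜ = 0) :
    (span ℂ (range (expLp μ))).topologicalClosure = ⊤ := by
  have := isCompact_iff_compactSpace.mp hK
  have hsub : BoundedContinuousFunction.toLp 2 μ ℂ '' expSubalgebra ⊆
      (span ℂ (range (expLp μ)) : Set (Lp ℂ 2 μ)) := by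
    rw [← StarSubalgebra.coe_toSubalgebra, ← Subalgebra.coe_toSubmodule, expSubalgebra_toSubmodule]
    exact (image_span_subset_span (BoundedContinuousFunction.toLp 2 μ ℂ).toLinearMap _).trans
      (by rw [← range_comp]; rfl)
  refine eq_top_iff.mpr fun f _ => ?_
  refine closure_minimal ?_ isClosed_closure
    (BoundedContinuousFunction.toLp_denseRange ℂ μ ℂ (by norm_num) f)
  rintro _ ⟨g, rfl⟩
  exact closure_mono hsub
    (toLp_mem_closure_image_of_dense μ hμK (dense_bcfRestrict_image_expSubalgebra K) g)

theorem stmt_4_general (μ : Measure ℝ) [IsProbabilityMeasure μ]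
    (hcpt : ∃ K : Set ℝ, IsCompact K ∧ μ Kᶜ = 0)
    (Λ : Set ℝ) :
    (ExpOrthonormal μ Λ ∧ ExpTotal μ Λ) ↔
      ∀ ξ : ℝ, (∑' l : Λ, ‖FT μ (ξ + (l : ℝ))‖ ^ 2) = 1 := by
  obtain ⟨K, hK, hμK⟩ := hcpt
  rw [expOrthonormal_iff, expTotal_iff,
    orthonormal_and_dense_iff_tsum_norm_inner_sq_eq_one (norm_expLp μ)
      (topologicalClosure_span_expLp_eq_top μ hK hμK) (v := fun l : Λ => expLp μ l)
      fun _ ⟨l, hl⟩ => ⟨l, hl⟩]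
  simp_rw [← norm_inner_expLp_expLp_neg μ]
  exact neg_surjective.forall

theorem stmt_4 (μ : Measure ℝ) [IsProbabilityMeasure μ]
    (hcpt : ∃ K : Set ℝ, IsCompact K ∧ μ Kᶜ = 0)
    (Λ : Set ℝ) (hΛ : Λ.Countable) :
    (ExpOrthonormal μ Λ ∧ ExpTotal μ Λ) ↔
      ∀ ξ : ℝ, (∑' l : Λ, ‖FT μ (ξ + (l : ℝ))‖ ^ 2) = 1 :=
  stmt_4_general μ hcpt Λ
end

section
/- Let ρ = u^{1/r} where 0 < u < 1 is rational and r > 1 is minimal (so ρ is irrational with minimal polynomial x^r − u over ℚ). Then μ_{ρ,N} is not a spectral measure. -/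
open MeasureTheory Complex Real
open scoped ENNReal

/-- `μ` is the self-similar measure `μ(·) = (1/N) ∑_{j<N} μ(ρ⁻¹(·) − j)`. -/
def IsSelfSimilar (ρ : ℝ) (N : ℕ) (μ : Measure ℝ) : Prop :=
  μ = (N : ℝ≥0∞)⁻¹ • ∑ j ∈ Finset.range N, μ.map (fun x => ρ * x + (j : ℝ))

/-- `μ` is a spectral measure: `L²(μ)` admits an orthonormal basis of
exponentials, i.e. a countable maximal orthonormal family `(e_λ)_{λ∈Λ}`. -/
def IsSpectral (μ : Measure ℝ) : Prop :=
  ∃ Λ : Set ℝ, Λ.Countable ∧ ExpOrthonormal μ Λ ∧ ExpTotal μ Λ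

/-!
If `Λ` were a spectrum, every difference `λ - λ'` of two of its points would be a zero of
`μ̂(ξ) = ∏ₙ m_N(ρⁿξ)` (`m_N = mask N`), i.e. `ρⁿ (λ - λ') ∈ (ℤ \ Nℤ) / N` for some `n`.
Since `1, ρ, …, ρ^(r-1)` are linearly independent over `ℚ`, a relation
`a ρ^(-n₁) + b ρ^(-n₂) = c ρ^(-n₃)` with nonzero rationals forces `n₁ ≡ n₂ ≡ n₃ (mod r)`;
applied to the triangles of `Λ`, this puts all these `n` in one residue class `m`. Then `ρ^m Λ`
is an orthogonal set of frequencies for `ν = μ_{ρ^r,N}`, whose transform `∏ₜ m_N(ρ^(rt) ξ)`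
keeps only the factors of `μ̂(ρ^m ξ)` of index `≡ 0 (mod r)`, so
`|μ̂(ξ)| ≤ |m_N(ρ^(m+1) ξ)| |ν̂(ρ^m ξ)|`. Parseval for `μ` and Bessel for `ν` now give
`1 = ∑ |μ̂(ξ - λ)|² ≤ ∑ |m_N(ρ^(m+1) (ξ - λ))|² |ν̂(ρ^m (ξ - λ))|² ≤ ∑ |ν̂(ρ^m (ξ - λ))|² ≤ 1`,
and the middle inequality is strict when `ξ` lies slightly off a point of `Λ`.
-/

namespace SelfSimilarSpectral

open Filter Topology

noncomputable def expChar (w x : ℝ) : ℂ := exp (-2 * π * I * w * x)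

@[simp]
lemma norm_expChar (w x : ℝ) : ‖expChar w x‖ = 1 := by
  rw [expChar, show -2 * π * I * w * x = ((-2 * π * w * x : ℝ) : ℂ) * I by push_cast; ring,
    norm_exp_ofReal_mul_I]

lemma expChar_mul_expChar (w w' x : ℝ) : expChar w x * expChar w' x = expChar (w + w') x := by
  simp only [expChar, ← Complex.exp_add]; push_cast; ring_nf

lemma conj_expChar (w x : ℝ) : starRingEnd ℂ (expChar w x) = expChar (-w) x := by
  simp only [expChar, ← Complex.exp_conj, map_mul, map_neg, map_ofNat, conj_I, conj_ofReal]
  push_cast; ring_nf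

lemma expChar_natCast (θ : ℝ) (j : ℕ) : expChar θ j = expChar θ 1 ^ j := by
  simp only [expChar, ← Complex.exp_nat_mul]; push_cast; ring_nf

lemma expChar_eq_one_iff (w x : ℝ) : expChar w x = 1 ↔ ∃ k : ℤ, w * x = k := by
  rw [expChar, Complex.exp_eq_one_iff]
  constructor
  · rintro ⟨n, hn⟩
    refine ⟨-n, ?_⟩
    have h : ((w * x : ℝ) : ℂ) = ((-n : ℤ) : ℂ) := by
      apply mul_right_cancel₀ (by simp [pi_ne_zero] : (2 * π * I : ℂ) ≠ 0)
      push_cast; linear_combination -hn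
    exact_mod_cast h
  · rintro ⟨k, hk⟩
    refine ⟨-k, ?_⟩
    rw [show (-2 * π * I * w * x : ℂ) = -(((w * x : ℝ) : ℂ) * (2 * π * I)) by push_cast; ring, hk]
    push_cast; ring

@[fun_prop]
lemma continuous_expChar (w : ℝ) : Continuous (expChar w) := by
  unfold expChar; fun_prop

lemma integrable_expChar (κ : Measure ℝ) [IsFiniteMeasure κ] (w : ℝ) : Integrable (expChar w) κ :=
  (integrable_const (1 : ℝ)).mono' (continuous_expChar w).aestronglyMeasurable (by simp)

lemma FT_eq_integral_expChar (κ : Measure ℝ) (ξ : ℝ) : FT κ ξ = ∫ x, expChar ξ x ∂κ := rfl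

section FourierTransform

variable (κ : Measure ℝ) [IsProbabilityMeasure κ]

@[simp]
lemma FT_zero : FT κ 0 = 1 := by
  simp [FT]

lemma norm_FT_le_one (ξ : ℝ) : ‖FT κ ξ‖ ≤ 1 := by
  rw [FT_eq_integral_expChar]
  exact (norm_integral_le_integral_norm _).trans (by simp)

lemma continuous_FT : Continuous (FT κ) :=
  continuous_of_dominated (bound := fun _ => 1)
    (fun _ => (continuous_expChar _).aestronglyMeasurable)
    (fun ξ => Eventually.of_forall fun x => (norm_expChar ξ x).le) (integrable_const 1)
    (Eventually.of_forall fun x => by fun_prop)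

lemma eventually_FT_ne_zero : ∀ᶠ ζ in 𝓝 0, FT κ ζ ≠ 0 :=
  (continuous_FT κ).continuousAt.eventually_ne (by simp)

end FourierTransform

noncomputable def mask (N : ℕ) (θ : ℝ) : ℂ := (N : ℂ)⁻¹ * ∑ j ∈ Finset.range N, expChar θ j

lemma norm_mask_le_one (N : ℕ) (θ : ℝ) : ‖mask N θ‖ ≤ 1 := by
  rw [mask, norm_mul, norm_inv, Complex.norm_natCast]
  calc (N : ℝ)⁻¹ * ‖∑ j ∈ Finset.range N, expChar θ j‖
      ≤ (N : ℝ)⁻¹ * N := by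
        gcongr
        exact (norm_sum_le _ _).trans (by simp)
    _ ≤ 1 := inv_mul_le_one_of_le₀ le_rfl (Nat.cast_nonneg N)

lemma mask_eq_zero_iff {N : ℕ} (hN : 0 < N) (θ : ℝ) :
    mask N θ = 0 ↔ ∃ k : ℤ, ¬ (N : ℤ) ∣ k ∧ θ = k / N := by
  have hN' : (N : ℝ) ≠ 0 := by positivity
  have hgeom (z : ℂ) : ∑ j ∈ Finset.range N, z ^ j = 0 ↔ z ^ N = 1 ∧ z ≠ 1 := by
    constructor
    · intro h
      refine ⟨sub_eq_zero.mp (by rw [← geom_sum_mul, h, zero_mul]), fun hz => ?_⟩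
      simp [hz, hN.ne'] at h
    · rintro ⟨hzN, hz1⟩
      rw [geom_sum_eq hz1, hzN, sub_self, zero_div]
  simp only [mask, expChar_natCast]
  rw [mul_eq_zero, inv_eq_zero, Nat.cast_eq_zero, or_iff_right hN.ne',
    hgeom, ← expChar_natCast, expChar_eq_one_iff, Ne, expChar_eq_one_iff]
  simp only [mul_one]
  constructor
  · rintro ⟨⟨k, hk⟩, hθ⟩
    refine ⟨k, fun ⟨c, hc⟩ => hθ ⟨c, ?_⟩, by rw [← hk]; field_simp⟩
    apply mul_right_cancel₀ hN'
    rw [hk, hc]; push_cast; ring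
  · rintro ⟨k, hk, rfl⟩
    refine ⟨⟨k, by field_simp⟩, fun ⟨c, hc⟩ => hk ⟨c, ?_⟩⟩
    rw [div_eq_iff hN'] at hc
    exact_mod_cast hc.trans (mul_comm _ _)

lemma norm_mask_lt_one {N : ℕ} (hN : 1 < N) {θ : ℝ} (hθ : ∀ k : ℤ, θ ≠ k) :
    ‖mask N θ‖ < 1 := by
  have hz : expChar θ 1 ≠ 1 := fun h => by
    obtain ⟨k, hk⟩ := (expChar_eq_one_iff θ 1).mp h
    exact hθ k (by simpa using hk)
  -- an average of unit vectors that are not all equal lies strictly inside the unit ball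
  have hmask : mask N θ = ∑ j ∈ Finset.range N, (N : ℝ)⁻¹ • expChar θ j := by
    rw [mask, Finset.mul_sum]
    simp [Complex.real_smul]
  rw [hmask]
  refine norm_sum_lt_of_strictConvexSpace (i := 0) (j := 1) (fun _ _ => by positivity)
    (by simp; field_simp) (by simp; omega) (by simp; omega) ?_ (by positivity) (by positivity)
    (fun _ _ => (norm_expChar _ _).le)
  simpa [expChar] using hz.symm

section SelfSimilar

variable {κ : Measure ℝ} [IsProbabilityMeasure κ] {a : ℝ} {N : ℕ}

lemma FT_eq_mask_mul (hκ : IsSelfSimilar a N κ) (ξ : ℝ) :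
    FT κ ξ = mask N ξ * FT κ (a * ξ) := by
  have hmap (j : ℕ) :
      ∫ x, expChar ξ x ∂(κ.map fun x => a * x + j) = expChar ξ j * FT κ (a * ξ) := by
    rw [integral_map (by fun_prop) (by fun_prop), FT_eq_integral_expChar, ← integral_const_mul]
    congr 1 with x
    simp only [expChar, ← Complex.exp_add]
    push_cast; ring_nf
  conv_lhs => rw [FT_eq_integral_expChar, hκ]
  rw [integral_smul_measure, integral_finsetSum_measure (fun j _ => integrable_expChar _ ξ)]
  simp only [hmap, ← Finset.sum_mul, mask, ENNReal.toReal_inv, ENNReal.toReal_natCast,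
    Complex.real_smul]
  push_cast; ring

lemma FT_eq_prod_mask_mul (hκ : IsSelfSimilar a N κ) (ξ : ℝ) (K : ℕ) :
    FT κ ξ = (∏ n ∈ Finset.range K, mask N (a ^ n * ξ)) * FT κ (a ^ K * ξ) := by
  induction K with
  | zero => simp
  | succ K ih =>
    rw [ih, FT_eq_mask_mul hκ (a ^ K * ξ), Finset.prod_range_succ, pow_succ', mul_assoc a,
      mul_assoc]

lemma norm_FT_le_prod_norm_mask (hκ : IsSelfSimilar a N κ) (ξ : ℝ) {K : ℕ}
    {s : Finset ℕ} (hs : s ⊆ Finset.range K) :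
    ‖FT κ ξ‖ ≤ ∏ n ∈ s, ‖mask N (a ^ n * ξ)‖ := by
  rw [FT_eq_prod_mask_mul hκ ξ K, norm_mul, norm_prod]
  calc (∏ n ∈ Finset.range K, ‖mask N (a ^ n * ξ)‖) * ‖FT κ (a ^ K * ξ)‖
      ≤ ∏ n ∈ Finset.range K, ‖mask N (a ^ n * ξ)‖ :=
        mul_le_of_le_one_right (by positivity) (norm_FT_le_one κ _)
    _ ≤ ∏ n ∈ s, ‖mask N (a ^ n * ξ)‖ :=
        Finset.prod_le_prod_of_subset_of_le_one hs (fun _ _ => norm_nonneg _)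
          (fun _ _ _ => norm_mask_le_one N _)

lemma norm_FT_le_norm_FT_pow_mul (hκ : IsSelfSimilar a N κ) (ξ : ℝ) (K : ℕ) :
    ‖FT κ ξ‖ ≤ ‖FT κ (a ^ K * ξ)‖ := by
  rw [FT_eq_prod_mask_mul hκ ξ K, norm_mul, norm_prod]
  exact mul_le_of_le_one_left (norm_nonneg _)
    (Finset.prod_le_one (fun _ _ => norm_nonneg _) (fun _ _ => norm_mask_le_one N _))

lemma FT_eq_zero_of_mask_eq_zero (hκ : IsSelfSimilar a N κ) {ξ : ℝ} {n : ℕ}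
    (h : mask N (a ^ n * ξ) = 0) : FT κ ξ = 0 := by
  rw [FT_eq_prod_mask_mul hκ ξ (n + 1)]
  exact mul_eq_zero_of_left (Finset.prod_eq_zero (Finset.self_mem_range_succ n) h) _

lemma FT_eq_zero_iff (ha : |a| < 1) (hκ : IsSelfSimilar a N κ) (ξ : ℝ) :
    FT κ ξ = 0 ↔ ∃ n, mask N (a ^ n * ξ) = 0 := by
  refine ⟨fun h => ?_, fun ⟨n, hn⟩ => FT_eq_zero_of_mask_eq_zero hκ hn⟩
  have hlim : Tendsto (fun K : ℕ => a ^ K * ξ) atTop (𝓝 0) := by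
    simpa using (tendsto_pow_atTop_nhds_zero_of_abs_lt_one ha).mul_const ξ
  obtain ⟨K, hK⟩ := (hlim.eventually (eventually_FT_ne_zero κ)).exists
  rw [FT_eq_prod_mask_mul hκ ξ K, mul_eq_zero, or_iff_left hK, Finset.prod_eq_zero_iff] at h
  obtain ⟨n, -, hn⟩ := h
  exact ⟨n, hn⟩

end SelfSimilar

section PowerRatio

variable {μ ν : Measure ℝ} [IsProbabilityMeasure μ] [IsProbabilityMeasure ν] {ρ : ℝ} {r N : ℕ}

lemma norm_FT_le_norm_mask_mul_norm_FT (hr : 1 < r) (hρ : |ρ| < 1)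
    (hμ : IsSelfSimilar ρ N μ) (hν : IsSelfSimilar (ρ ^ r) N ν) (m : ℕ) (ζ : ℝ) :
    ‖FT μ ζ‖ ≤ ‖mask N (ρ ^ (m + 1) * ζ)‖ * ‖FT ν (ρ ^ m * ζ)‖ := by
  refine (norm_FT_le_norm_FT_pow_mul hμ ζ m).trans ?_
  rw [pow_succ', mul_assoc]
  generalize ρ ^ m * ζ = ζ'
  -- the factors `m(ρⁿζ')` of `μ̂(ζ')` include `m(ρζ')` and the factors `m(ρ^{rt}ζ')` of `ν̂(ζ')`
  have hbound (T : ℕ) :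
      ‖FT μ ζ'‖ * ‖FT ν ((ρ ^ r) ^ T * ζ')‖ ≤ ‖mask N (ρ * ζ')‖ * ‖FT ν ζ'‖ := by
    have hs : insert 1 ((Finset.range T).image (r * ·)) ⊆ Finset.range (r * T + 2) := by
      intro n hn
      simp only [Finset.mem_insert, Finset.mem_image, Finset.mem_range] at hn ⊢
      rcases hn with rfl | ⟨t, ht, rfl⟩
      · omega
      · nlinarith
    have h1 : 1 ∉ (Finset.range T).image (r * ·) := by
      simp only [Finset.mem_image, not_exists, not_and]
      exact fun t _ h => by have := Nat.eq_one_of_mul_eq_one_right h; omega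
    have hμζ := norm_FT_le_prod_norm_mask hμ ζ' hs
    rw [Finset.prod_insert h1, pow_one,
      Finset.prod_image fun _ _ _ _ h => Nat.eq_of_mul_eq_mul_left (by omega) h] at hμζ
    rw [FT_eq_prod_mask_mul hν ζ' T, norm_mul, norm_prod, ← mul_assoc]
    simp only [← pow_mul]
    gcongr
  have hlim : Tendsto (fun T : ℕ => ‖FT μ ζ'‖ * ‖FT ν ((ρ ^ r) ^ T * ζ')‖) atTop
      (𝓝 ‖FT μ ζ'‖) := by
    have hr' : |ρ ^ r| < 1 := by
      rw [abs_pow]; exact pow_lt_one₀ (abs_nonneg ρ) hρ (by omega)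
    have h0 : Tendsto (fun T : ℕ => (ρ ^ r) ^ T * ζ') atTop (𝓝 0) := by
      simpa using (tendsto_pow_atTop_nhds_zero_of_abs_lt_one hr').mul_const ζ'
    simpa using ((continuous_FT ν).tendsto 0 |>.comp h0).norm.const_mul ‖FT μ ζ'‖
  exact le_of_tendsto' hlim hbound

lemma FT_pow_mod_mul_eq_zero (hν : IsSelfSimilar (ρ ^ r) N ν) {n : ℕ} {d : ℝ}
    (h : mask N (ρ ^ n * d) = 0) : FT ν (ρ ^ (n % r) * d) = 0 :=
  FT_eq_zero_of_mask_eq_zero hν (n := n / r)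
    (by rwa [← pow_mul, ← mul_assoc, ← pow_add, Nat.div_add_mod])

end PowerRatio

section ModelMeasure

open Set Function

variable {N : ℕ} {a : ℝ}

noncomputable def digit (N n : ℕ) (x : ℝ) : ℤ := ⌊(N : ℝ) ^ (n + 1) * x⌋ % N

noncomputable def digitSum (N : ℕ) (a x : ℝ) : ℝ := ∑' n, a ^ n * digit N n x

lemma abs_digit_le (hN : 0 < N) (n : ℕ) (x : ℝ) : |(digit N n x : ℝ)| ≤ N := by
  have h0 : 0 ≤ digit N n x := Int.emod_nonneg _ (by omega)
  have h1 : digit N n x < N := Int.emod_lt_of_pos _ (by omega)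
  rw [abs_of_nonneg (by exact_mod_cast h0)]
  exact_mod_cast h1.le

lemma summable_digitSum (hN : 0 < N) (ha : |a| < 1) (x : ℝ) :
    Summable fun n => a ^ n * digit N n x :=
  Summable.of_norm_bounded (g := fun n => |a| ^ n * N)
    ((summable_geometric_of_lt_one (abs_nonneg a) ha).mul_right (N : ℝ)) fun n => by
      rw [Real.norm_eq_abs, abs_mul, abs_pow]
      exact mul_le_mul_of_nonneg_left (abs_digit_le hN n x) (by positivity)

lemma measurable_digitSum (hN : 0 < N) (ha : |a| < 1) : Measurable (digitSum N a) := by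
  refine measurable_of_tendsto_metrizable' atTop (fun K => ?_)
    (tendsto_pi_nhds.mpr fun x => (summable_digitSum hN ha x).hasSum.tendsto_sum_nat)
  refine Finset.measurable_sum _ fun n _ => Measurable.const_mul ?_ _
  exact (measurable_of_countable fun z : ℤ => ((z % N : ℤ) : ℝ)).comp
    (Int.measurable_floor.comp (measurable_const_mul _))

lemma digit_div_add (hN : 0 < N) {j : ℕ} (hj : j < N) {y : ℝ} (hy : y ∈ Ico (0 : ℝ) 1) :
    digit N 0 ((y + j) / N) = j := by
  rw [digit, zero_add, pow_one, mul_div_cancel₀ _ (by positivity), Int.floor_add_natCast,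
    Int.floor_eq_zero_iff.mpr hy, zero_add]
  exact Int.emod_eq_of_lt (by positivity) (by exact_mod_cast hj)

lemma digit_succ_div_add (hN : 0 < N) (j : ℕ) (y : ℝ) (n : ℕ) :
    digit N (n + 1) ((y + j) / N) = digit N n y := by
  have h : (N : ℝ) ^ (n + 1 + 1) * ((y + j) / N) = N ^ (n + 1) * y + ((N * (N ^ n * j) : ℤ)) := by
    push_cast; field_simp; ring
  rw [digit, h, Int.floor_add_intCast, Int.add_mul_emod_self_left, digit]

lemma digitSum_div_add (hN : 0 < N) (ha : |a| < 1) {j : ℕ} (hj : j < N) {y : ℝ}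
    (hy : y ∈ Ico (0 : ℝ) 1) : digitSum N a ((y + j) / N) = a * digitSum N a y + j := by
  rw [digitSum, (summable_digitSum hN ha _).tsum_eq_zero_add, pow_zero, one_mul,
    digit_div_add hN hj hy, digitSum, ← tsum_mul_left]
  simp only [digit_succ_div_add hN, pow_succ]
  push_cast
  ring_nf

lemma mem_Ico_div_iff (hN : 0 < N) (j : ℕ) (y : ℝ) :
    y ∈ Ico ((j : ℝ) / N) ((j + 1) / N) ↔ ⌊(N : ℝ) * y⌋ = j := by
  have hN' : (0 : ℝ) < N := by positivity
  rw [Int.floor_eq_iff, mem_Ico, div_le_iff₀ hN', lt_div_iff₀ hN']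
  push_cast
  constructor <;> rintro ⟨h₁, h₂⟩ <;> constructor <;> linarith

lemma Ico_zero_one_eq_biUnion (hN : 0 < N) :
    Ico (0 : ℝ) 1 = ⋃ j ∈ Finset.range N, Ico ((j : ℝ) / N) ((j + 1) / N) := by
  have hN' : (0 : ℝ) < N := by positivity
  ext y
  simp only [mem_iUnion, Finset.mem_range, exists_prop, mem_Ico_div_iff hN]
  constructor
  · rintro ⟨h₀, h₁⟩
    have hfl : 0 ≤ ⌊(N : ℝ) * y⌋ := Int.floor_nonneg.mpr (by positivity)
    have hlt : ⌊(N : ℝ) * y⌋ < N := Int.floor_lt.mpr (by push_cast; nlinarith)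
    exact ⟨⌊(N : ℝ) * y⌋.toNat, by omega, by omega⟩
  · rintro ⟨j, hj, hfl⟩
    have h := Int.floor_eq_iff.mp hfl
    push_cast at h
    have hj' : (j : ℝ) + 1 ≤ N := by exact_mod_cast hj
    constructor <;> nlinarith [h.1, h.2, (Nat.cast_nonneg j : (0 : ℝ) ≤ j)]

lemma map_div_add_restrict_Ico (hN : 0 < N) (j : ℕ) :
    (volume.restrict (Ico (0 : ℝ) 1)).map (fun y : ℝ => (y + j) / N) =
      (N : ℝ≥0∞) • volume.restrict (Ico ((j : ℝ) / N) ((j + 1) / N)) := by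
  have hN' : (0 : ℝ) < N := by positivity
  have hpre : (fun y : ℝ => (y + j) / N) ⁻¹' Ico ((j : ℝ) / N) ((j + 1) / N) = Ico 0 1 := by
    ext y
    simp only [mem_preimage, mem_Ico, div_le_div_iff_of_pos_right hN',
      div_lt_div_iff_of_pos_right hN']
    constructor <;> rintro ⟨h₁, h₂⟩ <;> constructor <;> linarith
  have hvol : volume.map (fun y : ℝ => (y + j) / N) = (N : ℝ≥0∞) • volume := by
    have hcomp :
        (fun y : ℝ => (y + j) / N) = (fun z => (j : ℝ) / N + z) ∘ fun y => (N : ℝ)⁻¹ * y := by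
      funext y; simp only [Function.comp_apply]; field_simp; ring
    rw [hcomp, ← Measure.map_map (by fun_prop) (by fun_prop),
      Real.map_volume_mul_left (inv_ne_zero hN'.ne'), Measure.map_smul,
      map_add_left_eq_self, inv_inv, abs_of_pos hN', ENNReal.ofReal_natCast]
  rw [← hpre, ← Measure.restrict_map (by fun_prop) measurableSet_Ico, hvol, Measure.restrict_smul]

lemma restrict_Ico_eq_smul_sum_map (hN : 0 < N) :
    volume.restrict (Ico (0 : ℝ) 1) = (N : ℝ≥0∞)⁻¹ •
      ∑ j ∈ Finset.range N, (volume.restrict (Ico (0 : ℝ) 1)).map (fun y : ℝ => (y + j) / N) := by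
  have hdisj : (Finset.range N : Set ℕ).Pairwise
      (Disjoint on fun j : ℕ => Ico ((j : ℝ) / N) ((j + 1) / N)) := fun i _ j _ hij =>
    disjoint_left.mpr fun y hi hj => hij (by
      rw [mem_Ico_div_iff hN] at hi hj; exact_mod_cast hi.symm.trans hj)
  rw [Finset.sum_congr rfl fun j _ => map_div_add_restrict_Ico hN j,
    ← Finset.smul_sum, smul_smul, ENNReal.inv_mul_cancel (by simp; omega) (by simp), one_smul]
  conv_lhs => rw [Ico_zero_one_eq_biUnion hN]
  rw [Measure.restrict_biUnion_finset hdisj fun _ => measurableSet_Ico, Measure.sum_fintype]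
  exact Finset.sum_coe_sort (Finset.range N)
    fun j : ℕ => volume.restrict (Ico ((j : ℝ) / N) ((j + 1) / N))

theorem exists_isSelfSimilar (hN : 0 < N) (ha : |a| < 1) :
    ∃ ν : Measure ℝ, IsProbabilityMeasure ν ∧ IsSelfSimilar a N ν := by
  have hφ := measurable_digitSum hN ha
  have : IsProbabilityMeasure (volume.restrict (Ico (0 : ℝ) 1)) := ⟨by simp⟩
  refine ⟨(volume.restrict (Ico (0 : ℝ) 1)).map (digitSum N a),
    Measure.isProbabilityMeasure_map hφ.aemeasurable, ?_⟩
  -- prepending the digit `j` acts on `digitSum` as the contraction `x ↦ a * x + j`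
  have hbranch (j : ℕ) (hj : j ∈ Finset.range N) :
      ((volume.restrict (Ico (0 : ℝ) 1)).map fun y : ℝ => (y + j) / N).map (digitSum N a) =
        ((volume.restrict (Ico (0 : ℝ) 1)).map (digitSum N a)).map fun x => a * x + j := by
    rw [Measure.map_map hφ (by fun_prop), Measure.map_map (by fun_prop) hφ]
    exact Measure.map_congr (ae_restrict_of_forall_mem measurableSet_Ico fun y hy =>
      digitSum_div_add hN ha (Finset.mem_range.mp hj) hy)
  rw [IsSelfSimilar, ← Finset.sum_congr rfl hbranch]
  conv_lhs => rw [restrict_Ico_eq_smul_sum_map hN]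
  ext s hs
  simp only [Measure.map_apply hφ hs, Measure.smul_apply, Measure.coe_finsetSum, Finset.sum_apply]

end ModelMeasure

section L2

variable (κ : Measure ℝ) [IsProbabilityMeasure κ]

lemma memLp_expChar (w : ℝ) : MemLp (expChar w) 2 κ :=
  MemLp.of_bound (continuous_expChar w).aestronglyMeasurable 1 (by simp)

noncomputable def expLp (w : ℝ) : Lp ℂ 2 κ := (memLp_expChar κ w).toLp (expChar w)

lemma inner_expLp_left (w : ℝ) (f : Lp ℂ 2 κ) :
    inner ℂ (expLp κ w) f = ∫ x, f x * starRingEnd ℂ (expChar w x) ∂κ := by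
  rw [L2.inner_def]
  refine integral_congr_ae ?_
  filter_upwards [(memLp_expChar κ w).coeFn_toLp] with x hx
  rw [expLp, hx, RCLike.inner_apply', mul_comm]

lemma inner_expLp (w ξ : ℝ) : inner ℂ (expLp κ w) (expLp κ ξ) = FT κ (ξ - w) := by
  rw [inner_expLp_left, FT_eq_integral_expChar]
  refine integral_congr_ae ?_
  filter_upwards [(memLp_expChar κ ξ).coeFn_toLp] with x hx
  rw [expLp, hx, conj_expChar, expChar_mul_expChar, sub_eq_add_neg]

lemma orthonormal_expLp {ι : Type*} {v : ι → ℝ}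
    (hv : ∀ i j, i ≠ j → FT κ (v j - v i) = 0) : Orthonormal ℂ fun i => expLp κ (v i) := by
  classical
  rw [orthonormal_iff_ite]
  intro i j
  split_ifs with h
  · rw [h, inner_expLp, sub_self, FT_zero]
  · rw [inner_expLp, hv i j h]

lemma hasSum_norm_FT_sq {Λ : Set ℝ} (hON : ExpOrthonormal κ Λ) (hT : ExpTotal κ Λ) (ξ : ℝ) :
    HasSum (fun l : Λ => ‖FT κ (ξ - l)‖ ^ 2) 1 := by
  have horth : Orthonormal ℂ fun l : Λ => expLp κ l := orthonormal_expLp κ fun i j hij => by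
    simpa [Ne.symm (Subtype.coe_ne_coe.mpr hij)] using hON j j.2 i i.2
  have hdense : (Submodule.span ℂ (Set.range fun l : Λ => expLp κ l))ᗮ = ⊥ := by
    refine (Submodule.eq_bot_iff _).mpr fun f hf => hT f fun l hl => ?_
    have h := (Submodule.mem_orthogonal _ _).mp hf _ (Submodule.subset_span ⟨⟨l, hl⟩, rfl⟩)
    rwa [inner_expLp_left] at h
  have h := (HilbertBasis.mkOfOrthogonalEqBot horth hdense).hasSum_inner_mul_inner
    (expLp κ ξ) (expLp κ ξ)
  simp only [HilbertBasis.coe_mkOfOrthogonalEqBot] at h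
  rw [inner_expLp, sub_self, FT_zero] at h
  have hterm (l : Λ) : inner ℂ (expLp κ ξ) (expLp κ l) * inner ℂ (expLp κ l) (expLp κ ξ)
      = ((‖FT κ (ξ - l)‖ ^ 2 : ℝ) : ℂ) := by
    rw [← inner_conj_symm (expLp κ ξ), RCLike.conj_mul, inner_expLp]
    norm_cast
  simp only [hterm] at h
  exact Complex.hasSum_ofReal.mp (by simpa using h)

lemma summable_and_tsum_norm_FT_sq_le_one {ι : Type*} {v : ι → ℝ}
    (hv : ∀ i j, i ≠ j → FT κ (v j - v i) = 0) (ξ : ℝ) :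
    Summable (fun i => ‖FT κ (ξ - v i)‖ ^ 2) ∧ ∑' i, ‖FT κ (ξ - v i)‖ ^ 2 ≤ 1 := by
  have horth := orthonormal_expLp κ hv
  have hle := horth.tsum_inner_products_le (expLp κ ξ)
  have hξ : ‖expLp κ ξ‖ ^ 2 = 1 := by
    rw [@norm_sq_eq_re_inner ℂ, inner_expLp, sub_self, FT_zero, RCLike.one_re]
  simp only [inner_expLp, hξ] at hle
  exact ⟨by simpa only [inner_expLp] using horth.inner_products_summable (expLp κ ξ), hle⟩

end L2

lemma not_expTotal_of_norm_FT_le {μ ν : Measure ℝ} [IsProbabilityMeasure μ]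
    [IsProbabilityMeasure ν] {Λ : Set ℝ} {N : ℕ} (hN : 1 < N) {b c : ℝ} (hb : b ≠ 0)
    (hν : ∀ x ∈ Λ, ∀ y ∈ Λ, x ≠ y → FT ν (c * x - c * y) = 0)
    (hdom : ∀ ζ, ‖FT μ ζ‖ ≤ ‖mask N (b * ζ)‖ * ‖FT ν (c * ζ)‖) (hON : ExpOrthonormal μ Λ) :
    ¬ ExpTotal μ Λ := by
  intro hT
  rcases Λ.eq_empty_or_nonempty with rfl | ⟨l₀, hl₀⟩
  · exact one_ne_zero ((hasSum_norm_FT_sq μ hON hT 0).unique hasSum_empty)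
  -- shift the frequency slightly off `l₀`, so that `|m(bε)| < 1` while `ν̂(cε) ≠ 0`
  have hν0 : ∀ᶠ ε in 𝓝 0, FT ν (c * ε) ≠ 0 :=
    (continuous_const_mul c).tendsto' 0 0 (mul_zero c) |>.eventually (eventually_FT_ne_zero ν)
  have hb1 : ∀ᶠ ε in 𝓝 (0 : ℝ), |b * ε| < 1 :=
    (continuous_abs.comp (continuous_const_mul b)).tendsto' 0 0 (by simp) |>.eventually_lt_const
      one_pos
  obtain ⟨ε, ⟨hνε, hbε⟩, hε⟩ := (((hν0.and hb1).filter_mono nhdsWithin_le_nhds).and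
    (self_mem_nhdsWithin : ∀ᶠ ε in 𝓝[>] (0 : ℝ), 0 < ε)).exists
  have hmask : ‖mask N (b * ε)‖ < 1 := norm_mask_lt_one hN fun k hk => by
    have hk0 : k = 0 := Int.abs_lt_one_iff.mp (by exact_mod_cast hk ▸ hbε)
    simp [hk0, hb, hε.ne'] at hk
  set ξ := l₀ + ε
  set F : Λ → ℝ := fun l => ‖FT ν (c * (ξ - l))‖ ^ 2
  set M : Λ → ℝ := fun l => ‖mask N (b * (ξ - l))‖ ^ 2
  obtain ⟨hF, hFle⟩ := summable_and_tsum_norm_FT_sq_le_one ν (v := fun l : Λ => c * l)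
    (fun i j hij => hν j j.2 i i.2 (Ne.symm (Subtype.coe_ne_coe.mpr hij))) (c * ξ)
  simp only [← mul_sub] at hF hFle
  have hdom' (l : Λ) : ‖FT μ (ξ - l)‖ ^ 2 ≤ M l * F l := by
    simp only [M, F, ← mul_pow]; gcongr; exact hdom _
  have hMF (l : Λ) : M l * F l ≤ F l :=
    mul_le_of_le_one_left (by positivity) (pow_le_one₀ (norm_nonneg _) (norm_mask_le_one N _))
  have hMF₀ : M ⟨l₀, hl₀⟩ * F ⟨l₀, hl₀⟩ < F ⟨l₀, hl₀⟩ := by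
    simp only [M, F, ξ, add_sub_cancel_left]
    exact mul_lt_of_lt_one_left (by positivity) (pow_lt_one₀ (norm_nonneg _) hmask two_ne_zero)
  have hMFsum := hF.of_nonneg_of_le (fun _ => by positivity) hMF
  have hPar := hasSum_norm_FT_sq μ hON hT ξ
  refine lt_irrefl (1 : ℝ) ?_
  calc (1 : ℝ) = ∑' l : Λ, ‖FT μ (ξ - l)‖ ^ 2 := hPar.tsum_eq.symm
    _ ≤ ∑' l, M l * F l := hPar.summable.tsum_le_tsum hdom' hMFsum
    _ < ∑' l, F l := hMFsum.tsum_lt_tsum hMF hMF₀ hF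
    _ ≤ 1 := hFle

section Algebra

open Polynomial IntermediateField

variable {ρ : ℝ} {u : ℚ} {r : ℕ}

lemma minpoly_natDegree_eq (hρ : ρ ^ r = u) (hρ0 : 0 < ρ) (hr : 0 < r)
    (hmin : ∀ s : ℕ, 1 ≤ s → s < r → ¬ ∃ v : ℚ, ρ ^ s = (v : ℝ)) :
    (minpoly ℚ ρ).natDegree = r := by
  have haeval : aeval ρ (X ^ r - C u) = 0 := by simp [hρ]
  have hint : IsIntegral ℚ ρ := ⟨_, monic_X_pow_sub_C u hr.ne', haeval⟩
  set d := (minpoly ℚ ρ).natDegree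
  have hd_le : d ≤ r := (natDegree_X_pow_sub_C (n := r) (r := u)) ▸
    natDegree_le_of_dvd (minpoly.dvd ℚ ρ haeval) (X_pow_sub_C_ne_zero hr u)
  refine hd_le.antisymm (not_lt.mp fun hlt => hmin d (minpoly.natDegree_pos hint) hlt ?_)
  -- `ρ ^ d` is, up to sign, the norm of `ρ` from `ℚ⟮ρ⟯`, since `N(ρ) ^ r = N(u) = u ^ d`
  have : FiniteDimensional ℚ ℚ⟮ρ⟯ := adjoin.finiteDimensional hint
  set x := AdjoinSimple.gen ℚ ρ
  have hx : x ^ r = algebraMap ℚ ℚ⟮ρ⟯ u := Subtype.ext (by simp [x, hρ])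
  have hnorm : Algebra.norm ℚ x ^ r = u ^ d := by
    rw [← map_pow, hx, Algebra.norm_algebraMap, adjoin.finrank hint]
  refine ⟨|Algebra.norm ℚ x|, ((pow_left_inj₀ (by positivity) (by positivity) hr.ne').mp ?_).symm⟩
  calc ((|Algebra.norm ℚ x| : ℚ) : ℝ) ^ r = |((Algebra.norm ℚ x ^ r : ℚ) : ℝ)| := by
        push_cast; rw [abs_pow]
    _ = (ρ ^ d) ^ r := by
        rw [hnorm, Rat.cast_pow, ← hρ, ← pow_mul, ← pow_mul, mul_comm, abs_of_pos (by positivity)]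

lemma linearIndependent_pow_of_minimal (hρ : ρ ^ r = u) (hρ0 : 0 < ρ) (hr : 0 < r)
    (hmin : ∀ s : ℕ, 1 ≤ s → s < r → ¬ ∃ v : ℚ, ρ ^ s = (v : ℝ)) :
    LinearIndependent ℚ fun i : Fin r => ρ ^ (i : ℕ) :=
  minpoly_natDegree_eq hρ hρ0 hr hmin ▸ linearIndependent_pow ρ

end Algebra

def IsNonzeroRat (x : ℝ) : Prop := ∃ q : ℚ, q ≠ 0 ∧ x = q

lemma IsNonzeroRat.neg {x : ℝ} (hx : IsNonzeroRat x) : IsNonzeroRat (-x) := by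
  obtain ⟨q, hq, rfl⟩ := hx
  exact ⟨-q, neg_ne_zero.mpr hq, by push_cast; rfl⟩

lemma isNonzeroRat_of_mask_eq_zero {N : ℕ} (hN : 0 < N) {θ : ℝ} (h : mask N θ = 0) :
    IsNonzeroRat θ := by
  obtain ⟨k, hk, rfl⟩ := (mask_eq_zero_iff hN θ).mp h
  exact ⟨k / N, div_ne_zero (Int.cast_ne_zero.mpr (by rintro rfl; simp at hk)) (by positivity),
    by push_cast; rfl⟩

section Residues

variable {ρ : ℝ} {u : ℚ} {r : ℕ} (hli : LinearIndependent ℚ fun i : Fin r => ρ ^ (i : ℕ))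
include hli

lemma eq_of_mul_pow_add_mul_pow_eq {A B C : ℚ} (hA : A ≠ 0) (hC : C ≠ 0) {i j k : Fin r}
    (h : A * ρ ^ (i : ℕ) + B * ρ ^ (j : ℕ) = C * ρ ^ (k : ℕ)) : i = k := by
  classical
  by_contra hik
  have hcoeff := Fintype.linearIndependent_iff.mp hli
    (fun t => (if t = i then A else 0) + (if t = j then B else 0) - (if t = k then C else 0))
    (by simp [sub_smul, add_smul, Finset.sum_add_distrib, Finset.sum_sub_distrib, ite_smul,
      Rat.smul_def, h])
  have hi := hcoeff i
  have hk := hcoeff k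
  by_cases hji : j = i
  · simp [hji, Ne.symm hik, hC] at hk
  · simp [Ne.symm hji, hik, hA] at hi

variable (hr : 0 < r) (hρ : ρ ^ r = u) (hu : u ≠ 0)
include hr hρ hu

lemma modEq_of_mul_pow_add_mul_pow_eq {A B C : ℚ} (hA : A ≠ 0) (hC : C ≠ 0) {e₁ e₂ e₃ : ℕ}
    (h : A * ρ ^ e₁ + B * ρ ^ e₂ = C * ρ ^ e₃) : e₁ ≡ e₃ [MOD r] := by
  have hpow (e : ℕ) : ρ ^ e = (u : ℝ) ^ (e / r) * ρ ^ (e % r) := by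
    rw [← hρ, ← pow_mul, ← pow_add, Nat.div_add_mod]
  have := eq_of_mul_pow_add_mul_pow_eq hli (A := A * u ^ (e₁ / r)) (B := B * u ^ (e₂ / r))
    (C := C * u ^ (e₃ / r)) (i := ⟨e₁ % r, Nat.mod_lt _ hr⟩) (j := ⟨e₂ % r, Nat.mod_lt _ hr⟩)
    (k := ⟨e₃ % r, Nat.mod_lt _ hr⟩) (mul_ne_zero hA (pow_ne_zero _ hu))
    (mul_ne_zero hC (pow_ne_zero _ hu))
    (by rw [hpow e₁, hpow e₂, hpow e₃] at h; push_cast; linear_combination h)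
  exact Fin.mk.inj this

lemma modEq_of_isNonzeroRat_pow_mul {d : ℝ} {n n' : ℕ} (h : IsNonzeroRat (ρ ^ n * d))
    (h' : IsNonzeroRat (ρ ^ n' * d)) : n ≡ n' [MOD r] := by
  obtain ⟨q, hq, hqd⟩ := h
  obtain ⟨q', hq', hqd'⟩ := h'
  refine modEq_of_mul_pow_add_mul_pow_eq hli hr hρ hu hq' hq (B := 0) (e₂ := 0) ?_
  rw [← hqd, ← hqd']
  ring

lemma modEq_of_isNonzeroRat_pow_mul_add {d₁ d₂ : ℝ} {n₁ n₂ n₃ : ℕ}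
    (h₁ : IsNonzeroRat (ρ ^ n₁ * d₁)) (h₂ : IsNonzeroRat (ρ ^ n₂ * d₂))
    (h₃ : IsNonzeroRat (ρ ^ n₃ * (d₁ + d₂))) : n₁ ≡ n₂ [MOD r] := by
  obtain ⟨q₁, hq₁, hd₁⟩ := h₁
  obtain ⟨q₂, hq₂, hd₂⟩ := h₂
  obtain ⟨q₃, hq₃, hd₃⟩ := h₃
  -- multiplying `d₁ + d₂` by `ρ ^ (n₁ + n₂ + n₃)` gives a relation between three monomials
  have hrel : (q₁ : ℝ) * ρ ^ (n₂ + n₃) + q₂ * ρ ^ (n₁ + n₃) = q₃ * ρ ^ (n₂ + n₁) := by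
    rw [← hd₁, ← hd₂, ← hd₃]; ring
  have h₁₃ : n₂ + n₃ ≡ n₂ + n₁ [MOD r] :=
    modEq_of_mul_pow_add_mul_pow_eq hli hr hρ hu hq₁ hq₃ hrel
  have h₂₃ : n₁ + n₃ ≡ n₁ + n₂ [MOD r] :=
    modEq_of_mul_pow_add_mul_pow_eq hli hr hρ hu hq₂ hq₃ (B := q₁) (e₂ := n₂ + n₃)
      (by rw [add_comm n₁ n₂]; linear_combination hrel)
  exact ((Nat.ModEq.add_left_cancel' n₂ h₁₃).symm).trans (Nat.ModEq.add_left_cancel' n₁ h₂₃)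

lemma exists_mod_eq_of_isNonzeroRat {Λ : Set ℝ}
    (hΛ : ∀ x ∈ Λ, ∀ y ∈ Λ, x ≠ y → ∃ n, IsNonzeroRat (ρ ^ n * (x - y))) :
    ∃ m, ∀ x ∈ Λ, ∀ y ∈ Λ, ∀ n, IsNonzeroRat (ρ ^ n * (x - y)) → n % r = m := by
  have hadj {x y z : ℝ} (hx : x ∈ Λ) (hz : z ∈ Λ) {n n' : ℕ} (h : IsNonzeroRat (ρ ^ n * (x - y)))
      (h' : IsNonzeroRat (ρ ^ n' * (y - z))) : n ≡ n' [MOD r] := by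
    by_cases hxz : x = z
    · subst hxz
      exact modEq_of_isNonzeroRat_pow_mul hli hr hρ hu h (by simpa [← mul_neg] using h'.neg)
    obtain ⟨n'', h''⟩ := hΛ x hx z hz hxz
    exact modEq_of_isNonzeroRat_pow_mul_add hli hr hρ hu h h' (by rwa [sub_add_sub_cancel])
  have hpair {x y x' y' : ℝ} (hy : y ∈ Λ) (hx' : x' ∈ Λ) (hx : x ∈ Λ) (hy' : y' ∈ Λ) {n n' : ℕ}
      (h : IsNonzeroRat (ρ ^ n * (x - y))) (h' : IsNonzeroRat (ρ ^ n' * (x' - y'))) :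
      n ≡ n' [MOD r] := by
    by_cases hyx' : y = x'
    · subst hyx'
      exact hadj hx hy' h h'
    obtain ⟨n'', h''⟩ := hΛ y hy x' hx' hyx'
    exact (hadj hx hx' h h'').trans (hadj hy hy' h'' h')
  by_cases hne : ∃ x ∈ Λ, ∃ y ∈ Λ, ∃ n, IsNonzeroRat (ρ ^ n * (x - y))
  · obtain ⟨x₀, hx₀, y₀, hy₀, n₀, h₀⟩ := hne
    exact ⟨n₀ % r, fun x hx y hy n h => hpair hy hx₀ hx hy₀ h h₀⟩
  · exact ⟨0, fun x hx y hy n h => (hne ⟨x, hx, y, hy, n, h⟩).elim⟩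

end Residues

end SelfSimilarSpectral

open SelfSimilarSpectral in
theorem stmt_9 (u : ℚ) (hu : 0 < u ∧ u < 1) (r : ℕ) (hr : 1 < r)
    (ρ : ℝ) (hρ : ρ ^ r = (u : ℝ)) (hρpos : 0 < ρ)
    (hmin : ∀ s : ℕ, 1 ≤ s → s < r → ¬ ∃ v : ℚ, ρ ^ s = (v : ℝ))
    (N : ℕ) (hN : 1 < N)
    (μ : Measure ℝ) [IsProbabilityMeasure μ] (hμ : IsSelfSimilar ρ N μ) :
    ¬ IsSpectral μ := by
  rintro ⟨Λ, -, hON, hT⟩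
  have hN0 : 0 < N := by omega
  have hρ1 : |ρ| < 1 := by
    rw [abs_of_pos hρpos]
    exact (pow_lt_one_iff_of_nonneg (n := r) hρpos.le (by omega)).mp
      (by rw [hρ]; exact_mod_cast hu.2)
  have hzero (x) (hx : x ∈ Λ) (y) (hy : y ∈ Λ) (hxy : x ≠ y) :
      ∃ n, mask N (ρ ^ n * (x - y)) = 0 :=
    (FT_eq_zero_iff hρ1 hμ _).mp (by simpa [hxy] using hON x hx y hy)
  obtain ⟨m, hm⟩ := exists_mod_eq_of_isNonzeroRat
    (linearIndependent_pow_of_minimal hρ hρpos (by omega) hmin) (by omega) hρ hu.1.ne'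
    fun x hx y hy hxy => (hzero x hx y hy hxy).imp fun n => isNonzeroRat_of_mask_eq_zero hN0
  obtain ⟨ν, _, hν⟩ := exists_isSelfSimilar (a := ρ ^ r) hN0
    (by rw [abs_pow]; exact pow_lt_one₀ (abs_nonneg ρ) hρ1 (by omega))
  refine not_expTotal_of_norm_FT_le hN (pow_ne_zero (m + 1) hρpos.ne') (fun x hx y hy hxy => ?_)
    (norm_FT_le_norm_mask_mul_norm_FT hr hρ1 hμ hν m) hON hT
  obtain ⟨n, hn⟩ := hzero x hx y hy hxy
  rw [← mul_sub, ← hm x hx y hy n (isNonzeroRat_of_mask_eq_zero hN0 hn)]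
  exact FT_pow_mod_mul_eq_zero hν hn
end

section
/- Let ρ be a root of a monic integer polynomial x^m + c₁x^{m-1} + ⋯ + c_m. Then for any integer a with N ∤ a, max_{1 ≤ n ≤ m} ‖ρ^{-n}·(a/N)‖ ≥ 1/(N·∑_{n=1}^m |c_n|), where ‖x‖ denotes the distance from x to the nearest integer. -/
/-!
Dividing the relation by `ρ ^ m` gives `a / N + ∑ c n * x n = 0` with `x n = ρ⁻ⁿ · a / N`.
Replacing each `x n` by its rounding error `x n - round (x n)` changes the sum by an integer `k`,
so the weighted errors sum to `-(a / N + k)`, which has absolute value at least `1 / N` because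
`N ∤ a`. On the other hand that sum is at most `∑ |c n|` times the largest error.
-/

open Finset

lemma one_add_sum_mul_inv_pow_eq_zero {K : Type*} [Field K] {ρ : K} (hρ : ρ ≠ 0) {m : ℕ}
    {c : ℕ → K} (hroot : ρ ^ m + ∑ n ∈ Icc 1 m, c n * ρ ^ (m - n) = 0) :
    1 + ∑ n ∈ Icc 1 m, c n * (ρ ^ n)⁻¹ = 0 := by
  have hpow : ∀ n ∈ Icc 1 m, ρ ^ (m - n) = ρ ^ m * (ρ ^ n)⁻¹ := fun n hn => by
    rw [pow_sub₀ ρ hρ (mem_Icc.1 hn).2]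
  have h : ρ ^ m * (1 + ∑ n ∈ Icc 1 m, c n * (ρ ^ n)⁻¹) = 0 := by
    rw [mul_add, mul_one, mul_sum, ← hroot]
    congr 1
    refine sum_congr rfl fun n hn => ?_
    rw [hpow n hn]
    ring
  exact (mul_eq_zero.1 h).resolve_left (pow_ne_zero _ hρ)

lemma one_div_le_abs_div_add_int {N : ℕ} {a : ℤ} (ha : ¬ (N : ℤ) ∣ a) (k : ℤ) :
    1 / (N : ℝ) ≤ |(a : ℝ) / N + k| := by
  obtain rfl | hN := N.eq_zero_or_pos
  · simp
  have hne : a + N * k ≠ 0 := fun h => ha ⟨-k, by linarith⟩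
  have hone : (1 : ℝ) ≤ |((a + N * k : ℤ) : ℝ)| := by
    exact_mod_cast Int.one_le_abs hne
  have hN' : (N : ℝ) ≠ 0 := by positivity
  rw [show (a : ℝ) / N + k = ((a + N * k : ℤ) : ℝ) / N by push_cast; field_simp, abs_div,
    Nat.abs_cast]
  gcongr

lemma sum_mul_sub_round {ι : Type*} (s : Finset ι) (c : ι → ℤ) (x : ι → ℝ) :
    ∑ i ∈ s, (c i : ℝ) * (x i - round (x i)) =
      ∑ i ∈ s, (c i : ℝ) * x i - ((∑ i ∈ s, c i * round (x i) : ℤ) : ℝ) := by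
  push_cast
  rw [← sum_sub_distrib]
  exact sum_congr rfl fun i _ => mul_sub _ _ _

lemma one_div_le_abs_sum_mul_sub_round {ι : Type*} {s : Finset ι} {c : ι → ℤ} {x : ι → ℝ}
    {N : ℕ} {a : ℤ} (ha : ¬ (N : ℤ) ∣ a) (hrel : (a : ℝ) / N + ∑ i ∈ s, (c i : ℝ) * x i = 0) :
    1 / (N : ℝ) ≤ |∑ i ∈ s, (c i : ℝ) * (x i - round (x i))| := by
  rw [sum_mul_sub_round, eq_neg_of_add_eq_zero_right hrel, ← neg_add', abs_neg]
  exact one_div_le_abs_div_add_int ha _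

lemma exists_abs_sum_mul_div_le_abs {ι : Type*} (s : Finset ι) (c e : ι → ℝ)
    (hc : 0 < ∑ i ∈ s, |c i|) :
    ∃ i ∈ s, |∑ i ∈ s, c i * e i| / ∑ i ∈ s, |c i| ≤ |e i| := by
  have hs : s.Nonempty := nonempty_of_sum_ne_zero hc.ne'
  obtain ⟨j, hj, hmax⟩ := exists_max_image s (fun i => |e i|) hs
  refine ⟨j, hj, (div_le_iff₀ hc).2 ?_⟩
  calc |∑ i ∈ s, c i * e i| ≤ ∑ i ∈ s, |c i| * |e i| := by
        simpa only [abs_mul] using abs_sum_le_sum_abs (fun i => c i * e i) s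
    _ ≤ ∑ i ∈ s, |c i| * |e j| := sum_le_sum fun i hi =>
        mul_le_mul_of_nonneg_left (hmax i hi) (abs_nonneg _)
    _ = |e j| * ∑ i ∈ s, |c i| := by rw [← sum_mul, mul_comm]

theorem stmt_10_general (N : ℕ) (ρ : ℝ) (hρ : ρ ≠ 0)
    (m : ℕ) (c : ℕ → ℤ)
    (hroot : ρ ^ m + ∑ n ∈ Finset.Icc 1 m, (c n : ℝ) * ρ ^ (m - n) = 0)
    (hsum : 0 < ∑ n ∈ Finset.Icc 1 m, |c n|)
    (a : ℤ) (ha : ¬ (N : ℤ) ∣ a) :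
    ∃ n ∈ Finset.Icc 1 m,
      (1 : ℝ) / (N * ∑ n ∈ Finset.Icc 1 m, |(c n : ℝ)|) ≤
        |(ρ ^ n)⁻¹ * ((a : ℝ) / N) - round ((ρ ^ n)⁻¹ * ((a : ℝ) / N))| := by
  set x : ℕ → ℝ := fun n => (ρ ^ n)⁻¹ * ((a : ℝ) / N)
  have hS : 0 < ∑ n ∈ Icc 1 m, |(c n : ℝ)| := by exact_mod_cast hsum
  have hrel : (a : ℝ) / N + ∑ n ∈ Icc 1 m, (c n : ℝ) * x n = 0 := by
    have h := congrArg (· * ((a : ℝ) / N)) (one_add_sum_mul_inv_pow_eq_zero hρ hroot)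
    simpa only [add_mul, one_mul, sum_mul, zero_mul, mul_assoc] using h
  obtain ⟨n, hn, hle⟩ := exists_abs_sum_mul_div_le_abs (Icc 1 m) (fun n => (c n : ℝ))
    (fun n => x n - round (x n)) hS
  refine ⟨n, hn, le_trans ?_ hle⟩
  rw [← div_div]
  gcongr
  exact one_div_le_abs_sum_mul_sub_round ha hrel

theorem stmt_10 (N : ℕ) (hN : 1 < N) (ρ : ℝ) (hρ : ρ ≠ 0)
    (m : ℕ) (hm : 1 ≤ m) (c : ℕ → ℤ)
    (hroot : ρ ^ m + ∑ n ∈ Finset.Icc 1 m, (c n : ℝ) * ρ ^ (m - n) = 0)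
    (hsum : 0 < ∑ n ∈ Finset.Icc 1 m, |c n|)
    (a : ℤ) (ha : ¬ (N : ℤ) ∣ a) :
    ∃ n ∈ Finset.Icc 1 m,
      (1 : ℝ) / (N * ∑ n ∈ Finset.Icc 1 m, |(c n : ℝ)|) ≤
        |(ρ ^ n)⁻¹ * ((a : ℝ) / N) - round ((ρ ^ n)⁻¹ * ((a : ℝ) / N))| :=
  stmt_10_general N ρ hρ m c hroot hsum a ha
end

section
/- Suppose Λ is an infinite bi-zero set of μ_{ρ,N} with 0 ∈ Λ and ρ is irrational with ρ^r irrational for every r ≥ 1 (i.e., ρ ∉ ℚ^{1/r} for all r ≥ 1). Then ρ is an algebraic integer. -/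
open Set

/-- The zero set `Z(μ̂_{ρ,N}) = { ρ^{-k} (a/N) : k ≥ 1, a ∈ ℤ, N ∤ a }`. -/
def Zset (ρ : ℝ) (N : ℕ) : Set ℝ :=
  {x | ∃ k : ℕ, 1 ≤ k ∧ ∃ a : ℤ, ¬ (N : ℤ) ∣ a ∧ x = (ρ ^ k)⁻¹ * ((a : ℝ) / N)}

/-- `Λ` is a bi-zero set of `μ_{ρ,N}`: `0 ∈ Λ` and `(Λ − Λ) \ {0} ⊆ Z(μ̂_{ρ,N})`. -/
def IsBiZero (ρ : ℝ) (N : ℕ) (Λ : Set ℝ) : Prop :=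
  0 ∈ Λ ∧ ∀ l ∈ Λ, ∀ l' ∈ Λ, l ≠ l' → l - l' ∈ Zset ρ N

/-! Write `β = ρ⁻¹`. Because no power of `ρ` is rational, an element `β^k a / N` of the zero set
determines `a`; hence the points of `Λ` in a coset `c + β^j ℤ / N` are pairwise incongruent
mod `N`, and there are only finitely many of them. So for a fixed `λ₀ = β^{k₀} a₀ / N ∈ Λ \ {0}`
there are `x ∈ Λ` with `x = β^k a / N`, `x - λ₀ = β^j b / N` and `k, j` arbitrarily large, which
gives `a₀ = β^n h(β)` with `h ∈ ℤ[X]` for every `n`. By Krull's intersection theorem in the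
Noetherian domain `ℤ[β]`, the ideal `(β)` cannot be proper, so `β` is a unit of `ℤ[β]`, and
then `ρ = β⁻¹` is integral over `ℤ`. -/

open Polynomial

theorem isIntegral_inv_of_forall_pow_mul_aeval_eq {R K : Type*} [CommRing R] [IsNoetherianRing R]
    [Field K] [Algebra R K] {β : K} {a : R} (ha : algebraMap R K a ≠ 0)
    (h : ∀ n : ℕ, ∃ p : R[X], β ^ n * aeval β p = algebraMap R K a) :
    IsIntegral R β⁻¹ := by
  have : Nontrivial R := nontrivial_of_ne a 0 (by rintro rfl; simp at ha)
  have hβ : β ≠ 0 := by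
    rintro rfl
    obtain ⟨p, hp⟩ := h 1
    exact ha (by simpa using hp.symm)
  let A := Algebra.adjoin R {β}
  have : IsNoetherianRing A := isNoetherianRing_of_fg ⟨{β}, by simp [A]⟩
  let b : A := ⟨β, Algebra.subset_adjoin rfl⟩
  have hspan : Ideal.span {b} = ⊤ := by
    by_contra hne
    have hmem : algebraMap R A a ∈ ⨅ n : ℕ, Ideal.span {b} ^ n := by
      rw [Submodule.mem_iInf]
      intro n
      obtain ⟨p, hp⟩ := h n
      rw [Ideal.span_singleton_pow, Ideal.mem_span_singleton']
      exact ⟨⟨aeval β p, aeval_mem_adjoin_singleton R β⟩, Subtype.ext (by simp [b, ← hp, mul_comm])⟩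
    rw [Ideal.iInf_pow_eq_bot_of_isDomain _ hne, Ideal.mem_bot] at hmem
    exact ha (congrArg Subtype.val hmem)
  -- `β q(β) = 1` for some `q`, so `β⁻¹` is a root of the reversal of `X q - 1`, which is monic.
  let := invertibleOfNonzero hβ
  obtain ⟨p, hp, hpβ⟩ :=
    Algebra.exists_aeval_invOf_eq_zero_of_idealMap_adjoin_sup_span_eq_top (R := R) β ⊥
      bot_ne_top (by rw [Ideal.map_bot, bot_sup_eq]; exact hspan)
  exact ⟨p, by simpa [Monic, sub_eq_zero] using hp, by rwa [← aeval_def, ← invOf_eq_inv]⟩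

theorem intCast_eq_of_pow_mul_eq_pow_mul {x : ℝ} (hx : ∀ r : ℕ, 1 ≤ r → Irrational (x ^ r))
    {k j : ℕ} {a b : ℤ} (ha : a ≠ 0) (h : x ^ k * a = x ^ j * b) : a = b := by
  have hx0 : x ≠ 0 := by simpa using (hx 1 le_rfl).ne_zero
  have hb : b ≠ 0 := by rintro rfl; simp_all
  wlog hkj : k ≤ j generalizing k j a b
  · exact (this hb h.symm ha (by omega)).symm
  obtain ⟨d, rfl⟩ := Nat.exists_eq_add_of_le hkj
  rcases Nat.eq_zero_or_pos d with rfl | hd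
  · exact_mod_cast mul_left_cancel₀ (pow_ne_zero k hx0) h
  · have hdb : x ^ d * b = a := by
      apply mul_left_cancel₀ (pow_ne_zero k hx0)
      rw [h, pow_add, mul_assoc]
    exact absurd hdb (((hx d hd).mul_intCast hb).ne_int a)

theorem mul_eq_inv_pow_mul_of_eq {ρ x : ℝ} {N k : ℕ} {a : ℤ} [NeZero N]
    (h : x = (ρ ^ k)⁻¹ * (a / N)) : N * x = ρ⁻¹ ^ k * a := by
  have hN : (N : ℝ) ≠ 0 := Nat.cast_ne_zero.2 (NeZero.ne N)
  rw [h, inv_pow]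
  field_simp

namespace IsBiZero

variable {ρ : ℝ} {N : ℕ} [NeZero N] {Λ : Set ℝ}

theorem finite_setOf_sub_eq (hirr : ∀ r : ℕ, 1 ≤ r → Irrational (ρ ^ r))
    (hbz : IsBiZero ρ N Λ) (c : ℝ) (j : ℕ) :
    {x ∈ Λ | ∃ a : ℤ, x - c = (ρ ^ j)⁻¹ * (a / N)}.Finite := by
  have hρ : ρ ≠ 0 := by simpa using (hirr 1 le_rfl).ne_zero
  have hN : (N : ℝ) ≠ 0 := Nat.cast_ne_zero.2 (NeZero.ne N)
  have hirr_inv : ∀ r : ℕ, 1 ≤ r → Irrational (ρ⁻¹ ^ r) := fun r hr => by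
    simpa [inv_pow] using (hirr r hr).inv
  set f : ℤ → ℝ := fun a => c + (ρ ^ j)⁻¹ * (a / N)
  have hinj : InjOn (Int.cast : ℤ → ZMod N) (f ⁻¹' Λ) := by
    intro a ha b hb hab
    by_contra hne
    have hfab : f a ≠ f b := fun h => hne (by simpa [f, hρ, hN] using h)
    obtain ⟨k, -, d, hd, hfd⟩ := hbz.2 _ ha _ hb hfab
    have hdab : d = a - b := by
      have hfab' : f a - f b = (ρ ^ j)⁻¹ * (((a - b : ℤ) : ℝ) / N) := by
        simp only [f]; push_cast; ring
      exact intCast_eq_of_pow_mul_eq_pow_mul hirr_inv (fun h0 => hd (h0 ▸ dvd_zero _))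
        ((mul_eq_inv_pow_mul_of_eq hfd).symm.trans (mul_eq_inv_pow_mul_of_eq hfab'))
    exact hd (hdab ▸ (ZMod.intCast_eq_intCast_iff_dvd_sub b a N).1 hab.symm)
  refine ((Finite.of_finite_image (toFinite _) hinj).image f).subset ?_
  rintro x ⟨hx, a, ha⟩
  exact ⟨a, by simpa [f, ← ha] using hx, by simp [f, ← ha]⟩

theorem exists_mul_eq_inv_pow_mul_sub_inv_pow_mul (hirr : ∀ r : ℕ, 1 ≤ r → Irrational (ρ ^ r))
    (hbz : IsBiZero ρ N Λ) (hΛ : Λ.Infinite) {l₀ : ℝ} (hl₀ : l₀ ∈ Λ) (B : ℕ) :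
    ∃ k ≥ B, ∃ j ≥ B, ∃ a b : ℤ, N * l₀ = ρ⁻¹ ^ k * a - ρ⁻¹ ^ j * b := by
  set bad : ℝ → Set ℝ := fun c => {x ∈ Λ | ∃ i < B, ∃ a : ℤ, x - c = (ρ ^ i)⁻¹ * (a / N)}
  have hbad : ∀ c, (bad c).Finite := fun c =>
    ((finite_Iio B).biUnion fun i _ => hbz.finite_setOf_sub_eq hirr c i).subset
      fun x ⟨hx, i, hi, a, ha⟩ => mem_biUnion hi ⟨hx, a, ha⟩
  obtain ⟨x, hxΛ, hx⟩ :=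
    (hΛ.sdiff (((hbad 0).union (hbad l₀)).union (toFinite {0, l₀}))).nonempty
  have large : ∀ c ∈ Λ, x ∉ bad c → x ≠ c → ∃ k ≥ B, ∃ a : ℤ, N * (x - c) = ρ⁻¹ ^ k * a := by
    intro c hc hxc hne
    obtain ⟨k, -, a, -, h⟩ := hbz.2 x hxΛ c hc hne
    exact ⟨k, not_lt.1 fun hk => hxc ⟨hxΛ, k, hk, a, h⟩, a, mul_eq_inv_pow_mul_of_eq h⟩
  simp only [mem_union, mem_insert_iff, mem_singleton_iff, not_or] at hx
  obtain ⟨⟨hx0, hxl₀⟩, hne0, hnel₀⟩ := hx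
  obtain ⟨k, hk, a, ha⟩ := large 0 hbz.1 hx0 hne0
  obtain ⟨j, hj, b, hb⟩ := large l₀ hl₀ hxl₀ hnel₀
  exact ⟨k, hk, j, hj, a, b, by linear_combination ha - hb⟩

end IsBiZero

theorem exists_pow_mul_aeval_eq {K : Type*} [Field K] {β : K} {k₀ k j n : ℕ}
    (hk : k₀ + n ≤ k) (hj : k₀ + n ≤ j) {a₀ a b : ℤ} (hβ : β ≠ 0)
    (h : β ^ k₀ * a₀ = β ^ k * a - β ^ j * b) :
    ∃ p : ℤ[X], β ^ n * aeval β p = a₀ := by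
  obtain ⟨k', rfl⟩ := Nat.exists_eq_add_of_le hk
  obtain ⟨j', rfl⟩ := Nat.exists_eq_add_of_le hj
  refine ⟨C a * X ^ k' - C b * X ^ j', mul_left_cancel₀ (pow_ne_zero k₀ hβ) ?_⟩
  simp only [map_sub, map_mul, eq_intCast, map_intCast, aeval_X_pow]
  linear_combination -h

theorem stmt_11_general (ρ : ℝ) (N : ℕ) (hN : 1 < N)
    (hirr : ∀ r : ℕ, 1 ≤ r → Irrational (ρ ^ r))
    (Λ : Set ℝ) (hΛ : Λ.Infinite) (hbz : IsBiZero ρ N Λ) :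
    IsIntegral ℤ ρ := by
  have hρ : ρ ≠ 0 := by simpa using (hirr 1 le_rfl).ne_zero
  have : NeZero N := ⟨by omega⟩
  obtain ⟨l₀, hl₀, hl₀0⟩ := (hΛ.sdiff (finite_singleton 0)).nonempty
  obtain ⟨k₀, -, a₀, ha₀, hl₀eq⟩ := hbz.2 l₀ hl₀ 0 hbz.1 hl₀0
  rw [← inv_inv ρ]
  refine isIntegral_inv_of_forall_pow_mul_aeval_eq (a := a₀) ?_ fun n => ?_
  · rw [algebraMap_int_eq, eq_intCast]
    exact_mod_cast fun h0 : a₀ = 0 => ha₀ (h0 ▸ dvd_zero _)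
  · obtain ⟨k, hk, j, hj, a, b, h⟩ := hbz.exists_mul_eq_inv_pow_mul_sub_inv_pow_mul hirr hΛ hl₀ (k₀ + n)
    exact exists_pow_mul_aeval_eq hk hj (inv_ne_zero hρ)
      (by rw [← h, ← mul_eq_inv_pow_mul_of_eq hl₀eq, sub_zero])

theorem stmt_11 (ρ : ℝ) (hρ : 0 < ρ ∧ ρ < 1) (N : ℕ) (hN : 1 < N)
    (hirr : ∀ r : ℕ, 1 ≤ r → Irrational (ρ ^ r))
    (Λ : Set ℝ) (hΛ : Λ.Infinite) (hbz : IsBiZero ρ N Λ) :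
    IsIntegral ℤ ρ :=
  stmt_11_general ρ N hN hirr Λ hΛ hbz
end

section
/- Let ρ = p/q with gcd(p,q) = 1, and let Λ be a bi-zero set of μ_{ρ,N}. Then there exists an integer m₀ ≥ 1 such that every nonzero λ ∈ Λ can be written as λ = p^{-m₀} q^{m} c/N with m ≥ m₀ and c an integer not divisible by q. Moreover, if N ∣ q, one can take c not divisible by N. -/
open Set

lemma extract_pow (n : ℕ) (hn : 1 < n) (a : ℤ) (ha : a ≠ 0) :
    ∃ (j : ℕ) (c : ℤ), ¬ (n : ℤ) ∣ c ∧ a = (n : ℤ) ^ j * c := by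
  have hfin : FiniteMultiplicity ((n : ℤ)) a := by
    rw [Int.finiteMultiplicity_iff]
    simpa using ⟨by omega, ha⟩
  obtain ⟨c, hc, hnc⟩ := hfin.exists_eq_pow_mul_and_not_dvd
  exact ⟨_, c, hnc, hc⟩

/-- canonical form of an element of the zero set -/
def Can (p q N : ℕ) (l : ℝ) (m : ℕ) (e : ℤ) (b : ℤ) : Prop :=
  1 ≤ m ∧ e ≤ (m : ℤ) ∧ ¬ (q : ℤ) ∣ b ∧ (p = 1 → e = 0) ∧ (1 < p → ¬ (p : ℤ) ∣ b) ∧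
    (N : ℝ) * l * (p : ℝ) ^ e = (q : ℝ) ^ m * (b : ℝ)

lemma can_of_mem {p q N : ℕ} (hp : 0 < p) (hpq : p < q) (hN : 1 < N) {x : ℝ}
    (hx : x ∈ Zset ((p : ℝ) / q) N) : ∃ m e b, Can p q N x m e b := by
  obtain ⟨k, hk, a, haN, hxeq⟩ := hx
  have hq1 : 1 < q := lt_of_le_of_lt (Nat.one_le_iff_ne_zero.mpr (by omega)) hpq
  have ha0 : a ≠ 0 := by rintro rfl; exact haN (dvd_zero _)
  obtain ⟨β, a₁, hqa₁, rfl⟩ := extract_pow q hq1 a ha0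
  have hp0 : (0 : ℝ) < p := by exact_mod_cast hp
  have hq0 : (0 : ℝ) < q := by exact_mod_cast (by omega : 0 < q)
  have hN0 : (0 : ℝ) < N := by exact_mod_cast (by omega : 0 < N)
  -- base equation : N * x * p^k = q^(k+β) * a₁
  have hbase : (N : ℝ) * x * (p : ℝ) ^ k = (q : ℝ) ^ (k + β) * ((a₁ : ℝ)) := by
    rw [hxeq]
    field_simp
    rw [div_pow, pow_add]
    push_cast
    field_simp
  rcases Nat.lt_or_ge 1 p with hp1 | hp1
  · -- p ≥ 2 : extract p-power from a₁
    have ha₁0 : a₁ ≠ 0 := by rintro rfl; exact hqa₁ (dvd_zero _)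
    obtain ⟨α, b, hpb, rfl⟩ := extract_pow p hp1 a₁ ha₁0
    have hqb : ¬ (q : ℤ) ∣ b := fun h => hqa₁ (Dvd.dvd.mul_left h _)
    refine ⟨k + β, (k : ℤ) - α, b, by omega, by push_cast; omega, hqb,
      by omega, fun _ => hpb, ?_⟩
    have hpne : (p : ℝ) ≠ 0 := ne_of_gt hp0
    rw [zpow_sub₀ hpne, zpow_natCast, zpow_natCast, mul_div_assoc',
      div_eq_iff (pow_ne_zero _ hpne)]
    push_cast at hbase ⊢
    linear_combination hbase
  · -- p = 1
    have hp1' : p = 1 := by omega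
    refine ⟨k + β, 0, a₁, by omega, by positivity, hqa₁, fun _ => rfl, by omega, ?_⟩
    rw [zpow_zero, mul_one]
    simpa [hp1'] using hbase

lemma can_shift {p q N : ℕ} (hp : 0 < p) {l : ℝ} {m : ℕ} {e E : ℤ} {b : ℤ}
    (heq : (N : ℝ) * l * (p : ℝ) ^ e = (q : ℝ) ^ m * (b : ℝ)) (hE : e ≤ E) :
    (N : ℝ) * l * (p : ℝ) ^ E = (q : ℝ) ^ m * (b : ℝ) * (p : ℝ) ^ ((E - e).toNat) := by
  have hpne : (p : ℝ) ≠ 0 := by positivity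
  have h1 : (p : ℝ) ^ E = (p : ℝ) ^ e * (p : ℝ) ^ ((E - e).toNat) := by
    rw [← zpow_natCast (p:ℝ) (E - e).toNat, ← zpow_add₀ hpne]
    congr 1
    omega
  rw [h1, ← mul_assoc, heq]

lemma can_bound {p q N : ℕ} (hp : 0 < p) (hpq : p < q) (hcop : Nat.Coprime p q) (hN : 1 < N)
    {l l' : ℝ} {m m' : ℕ} {e e' : ℤ} {b b' : ℤ}
    (h : Can p q N l m e b) (h' : Can p q N l' m' e' b')
    (hd : l = l' ∨ ∃ m'' e'' b'', Can p q N (l - l') m'' e'' b'') : e' ≤ (m : ℤ) := by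
  by_contra hlt
  push_neg at hlt
  obtain ⟨hm1, hem, hqb, hpe, hpb, heq⟩ := h
  obtain ⟨hm1', hem', hqb', hpe', hpb', heq'⟩ := h'
  have hq1 : 1 < q := lt_of_le_of_lt (Nat.one_le_iff_ne_zero.mpr (by omega)) hpq
  have hqZ : (q : ℤ) ≠ 0 := by exact_mod_cast (by omega : q ≠ 0)
  rcases Nat.lt_or_ge 1 p with hp1 | hple
  swap
  · have := hpe' (by omega); omega
  have hco : IsCoprime (q : ℤ) (p : ℤ) := by
    rw [Int.isCoprime_iff_gcd_eq_one, Int.gcd_natCast_natCast]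
    exact hcop.symm
  have hqb_of : ∀ (j : ℕ) (c : ℤ), (q : ℤ) ∣ c * (p : ℤ) ^ j → (q : ℤ) ∣ c :=
    fun j c hc => (hco.pow_right (n := j)).dvd_of_dvd_mul_right hc
  have hpb_of : ∀ (j : ℕ) (c : ℤ), (p : ℤ) ∣ (q : ℤ) ^ j * c → (p : ℤ) ∣ c :=
    fun j c hc => ((hco.symm).pow_right (n := j)).dvd_of_dvd_mul_left hc
  rcases hd with rfl | ⟨m'', e'', b'', hm1'', hem'', hqb'', _, hpb'', heq''⟩
  · -- same element
    have h2 := can_shift hp heq (le_of_lt (lt_of_le_of_lt hem hlt))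
    have key : (q : ℤ) ^ m * b * (p : ℤ) ^ ((e' - e).toNat) = (q : ℤ) ^ m' * b' := by
      have : (((q : ℤ) ^ m * b * (p : ℤ) ^ ((e' - e).toNat) : ℤ) : ℝ)
          = (((q : ℤ) ^ m' * b' : ℤ) : ℝ) := by
        push_cast
        linear_combination heq' - h2
      exact_mod_cast this
    have hm'big : m' = m + 1 + (m' - m - 1) := by omega
    have h3 : (q : ℤ) ^ m * (b * (p : ℤ) ^ ((e' - e).toNat))
        = (q : ℤ) ^ m * ((q : ℤ) * ((q : ℤ) ^ (m' - m - 1) * b')) := by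
      rw [hm'big] at key
      linear_combination key
    have h4 := mul_left_cancel₀ (pow_ne_zero m hqZ) h3
    exact hqb (hqb_of _ b ⟨_, h4⟩)
  · -- distinct elements, difference in zero set
    set E : ℤ := max e' e'' with hE
    have hA : e' ≤ E := le_max_left _ _
    have hB : e'' ≤ E := le_max_right _ _
    have hC : E = e' ∨ E = e'' := max_choice _ _
    have hCe : e ≤ E := le_trans hem (le_trans (le_of_lt hlt) hA)
    have h1 := can_shift hp heq hCe
    have h2 := can_shift hp heq' hA
    have h3 := can_shift hp heq'' hB
    have key : (q : ℤ) ^ m * b * (p : ℤ) ^ ((E - e).toNat)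
        = (q : ℤ) ^ m' * b' * (p : ℤ) ^ ((E - e').toNat)
          + (q : ℤ) ^ m'' * b'' * (p : ℤ) ^ ((E - e'').toNat) := by
      have : (((q : ℤ) ^ m * b * (p : ℤ) ^ ((E - e).toNat) : ℤ) : ℝ)
          = (((q : ℤ) ^ m' * b' * (p : ℤ) ^ ((E - e').toNat)
            + (q : ℤ) ^ m'' * b'' * (p : ℤ) ^ ((E - e'').toNat) : ℤ) : ℝ) := by
        push_cast
        linear_combination h2 + h3 - h1
      exact_mod_cast this
    rcases lt_trichotomy e'' e' with hce | hce | hce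
    · -- e'' < e' : E = e', p divides q^m' * b'
      rw [show (E - e').toNat = 0 by omega, pow_zero, mul_one] at key
      have hx : (p : ℤ) ∣ (q : ℤ) ^ m * b * (p : ℤ) ^ ((E - e).toNat) :=
        (dvd_pow_self (p : ℤ) (by omega : (E - e).toNat ≠ 0)).mul_left _
      have hz : (p : ℤ) ∣ (q : ℤ) ^ m'' * b'' * (p : ℤ) ^ ((E - e'').toNat) :=
        (dvd_pow_self (p : ℤ) (by omega : (E - e'').toNat ≠ 0)).mul_left _
      have heqd : (q : ℤ) ^ m' * b'
          = (q : ℤ) ^ m * b * (p : ℤ) ^ ((E - e).toNat)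
            - (q : ℤ) ^ m'' * b'' * (p : ℤ) ^ ((E - e'').toNat) := by
        linear_combination -key
      exact hpb' hp1 (hpb_of m' b' (heqd ▸ dvd_sub hx hz))
    · -- e'' = e' : E = e' = e''
      rw [show (E - e').toNat = 0 by omega, show (E - e'').toNat = 0 by omega] at key
      simp only [pow_zero, mul_one] at key
      have hm'big : m' = m + 1 + (m' - m - 1) := by omega
      have hm''big : m'' = m + 1 + (m'' - m - 1) := by omega
      have h4 : (q : ℤ) ^ m * (b * (p : ℤ) ^ ((E - e).toNat))
          = (q : ℤ) ^ m * ((q : ℤ) * ((q : ℤ) ^ (m' - m - 1) * b'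
            + (q : ℤ) ^ (m'' - m - 1) * b'')) := by
        rw [hm'big, hm''big] at key
        linear_combination key
      have h5 := mul_left_cancel₀ (pow_ne_zero m hqZ) h4
      exact hqb (hqb_of _ b ⟨_, h5⟩)
    · -- e' < e'' : E = e'', p divides q^m'' * b''
      rw [show (E - e'').toNat = 0 by omega, pow_zero, mul_one] at key
      have hx : (p : ℤ) ∣ (q : ℤ) ^ m * b * (p : ℤ) ^ ((E - e).toNat) :=
        (dvd_pow_self (p : ℤ) (by omega : (E - e).toNat ≠ 0)).mul_left _
      have hy : (p : ℤ) ∣ (q : ℤ) ^ m' * b' * (p : ℤ) ^ ((E - e').toNat) :=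
        (dvd_pow_self (p : ℤ) (by omega : (E - e').toNat ≠ 0)).mul_left _
      have heqd : (q : ℤ) ^ m'' * b''
          = (q : ℤ) ^ m * b * (p : ℤ) ^ ((E - e).toNat)
            - (q : ℤ) ^ m' * b' * (p : ℤ) ^ ((E - e').toNat) := by
        linear_combination -key
      exact hpb'' hp1 (hpb_of m'' b'' (heqd ▸ dvd_sub hx hy))

lemma q_dvd_cancel {p q : ℕ} (hcop : Nat.Coprime p q) {j : ℕ} {c : ℤ}
    (h : (q : ℤ) ∣ c * (p : ℤ) ^ j) : (q : ℤ) ∣ c := by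
  have hco : IsCoprime (q : ℤ) (p : ℤ) := by
    rw [Int.isCoprime_iff_gcd_eq_one, Int.gcd_natCast_natCast]
    exact hcop.symm
  exact (hco.pow_right (n := j)).dvd_of_dvd_mul_right h

theorem stmt_13 (p q : ℕ) (hp : 0 < p) (hpq : p < q) (hcop : Nat.Coprime p q)
    (N : ℕ) (hN : 1 < N) (ρ : ℝ) (hρ : ρ = (p : ℝ) / q)
    (Λ : Set ℝ) (hbz : IsBiZero ρ N Λ) :
    ∃ m₀ : ℕ, 1 ≤ m₀ ∧
      (∀ l ∈ Λ, l ≠ 0 → ∃ (m : ℕ) (c : ℤ), m₀ ≤ m ∧ ¬ (q : ℤ) ∣ c ∧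
        l = (q : ℝ) ^ m * (c : ℝ) / ((p : ℝ) ^ m₀ * N)) ∧
      (N ∣ q →
        ∀ l ∈ Λ, l ≠ 0 → ∃ (m : ℕ) (c : ℤ), m₀ ≤ m ∧ ¬ (N : ℤ) ∣ c ∧
          l = (q : ℝ) ^ m * (c : ℝ) / ((p : ℝ) ^ m₀ * N)) := by
  subst hρ
  have hq1 : 1 < q := lt_of_le_of_lt (Nat.one_le_iff_ne_zero.mpr (by omega)) hpq
  have hp0 : (0 : ℝ) < p := by exact_mod_cast hp
  have hq0 : (0 : ℝ) < q := by exact_mod_cast (by omega : 0 < q)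
  have hN0 : (0 : ℝ) < N := by exact_mod_cast (by omega : 0 < N)
  have hqZ : (q : ℤ) ≠ 0 := by exact_mod_cast (by omega : q ≠ 0)
  have hpZ : (p : ℤ) ≠ 0 := by exact_mod_cast (by omega : p ≠ 0)
  have hmem : ∀ l ∈ Λ, l ≠ 0 → l ∈ Zset ((p : ℝ) / q) N := by
    intro l hl hl0
    have := hbz.2 l hl 0 hbz.1 hl0
    simpa using this
  by_cases hone : ∀ l ∈ Λ, l = 0
  · exact ⟨1, le_refl 1, fun l hl hl0 => absurd (hone l hl) hl0,
      fun _ l hl hl0 => absurd (hone l hl) hl0⟩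
  push_neg at hone
  obtain ⟨l₀, hl₀, hl₀0⟩ := hone
  obtain ⟨M₀, E₀, B₀, hcan₀⟩ := can_of_mem hp hpq hN (hmem l₀ hl₀ hl₀0)
  have hdiff : ∀ l ∈ Λ, ∀ l' ∈ Λ,
      (l = l' ∨ ∃ m'' e'' b'', Can p q N (l - l') m'' e'' b'') := by
    intro l hl l' hl'
    by_cases hll : l = l'
    · exact Or.inl hll
    · exact Or.inr (can_of_mem hp hpq hN (hbz.2 l hl l' hl' hll))
  have Hbdd : ∀ z : ℤ, (∃ l ∈ Λ, l ≠ 0 ∧ ∃ m b, Can p q N l m z b) → z ≤ (M₀ : ℤ) := by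
    rintro z ⟨l, hl, hl0, m, b, hcan⟩
    exact can_bound hp hpq hcop hN hcan₀ hcan (hdiff l₀ hl₀ l hl)
  obtain ⟨E, hPE, hEub⟩ := Int.exists_greatest_of_bdd ⟨(M₀ : ℤ), Hbdd⟩
    ⟨E₀, l₀, hl₀, hl₀0, M₀, B₀, hcan₀⟩
  set m₀ : ℕ := max 1 E.toNat with hm₀def
  have H1 : ∀ l ∈ Λ, l ≠ 0 → ∃ (m : ℕ) (c : ℤ), m₀ ≤ m ∧ ¬ (q : ℤ) ∣ c ∧
      l = (q : ℝ) ^ m * (c : ℝ) / ((p : ℝ) ^ m₀ * N) := by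
    intro l hl hl0
    obtain ⟨m, e, b, hcan⟩ := can_of_mem hp hpq hN (hmem l hl hl0)
    obtain ⟨l', hl', hl0', m', b', hcan'⟩ := hPE
    have h1 : E ≤ (m : ℤ) :=
      can_bound hp hpq hcop hN hcan hcan' (hdiff l hl l' hl')
    have h2 : e ≤ E := hEub e ⟨l, hl, hl0, m, b, hcan⟩
    obtain ⟨hm1, hem, hqb, hpe0, hpb, heq⟩ := hcan
    have hmm₀ : m₀ ≤ m := by
      apply max_le hm1
      omega
    have hem₀ : e ≤ ((m₀ : ℕ) : ℤ) := by
      have : E ≤ (E.toNat : ℤ) := Int.self_le_toNat E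
      have h3 : (E.toNat : ℤ) ≤ (m₀ : ℤ) := by
        have := le_max_right 1 E.toNat
        exact_mod_cast this
      omega
    have hshift := can_shift hp heq hem₀
    rw [zpow_natCast] at hshift
    refine ⟨m, b * (p : ℤ) ^ (((m₀ : ℤ) - e).toNat), hmm₀,
      fun hc => hqb (q_dvd_cancel hcop hc), ?_⟩
    rw [eq_div_iff (by positivity)]
    push_cast
    linear_combination hshift
  refine ⟨m₀, le_max_left _ _, H1, ?_⟩
  intro hNq l hl hl0
  obtain ⟨m, c, hm, hqc, heq⟩ := H1 l hl hl0
  obtain ⟨k, hk, a, haN, hxeq⟩ := hmem l hl hl0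
  refine ⟨m, c, hm, ?_, heq⟩
  have hNqZ : (N : ℤ) ∣ (q : ℤ) := by exact_mod_cast hNq
  have hNZ : (N : ℤ) ≠ 0 := by exact_mod_cast (by omega : N ≠ 0)
  have hkey : (q : ℤ) ^ k * a * (p : ℤ) ^ m₀ = (q : ℤ) ^ m * c * (p : ℤ) ^ k := by
    have h0 : (((p : ℝ) / q) ^ k)⁻¹ * ((a : ℝ) / N)
        = (q : ℝ) ^ m * (c : ℝ) / ((p : ℝ) ^ m₀ * N) := hxeq.symm.trans heq
    rw [div_pow, inv_div] at h0
    field_simp at h0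
    have h1 : (q : ℤ) ^ k * a * ((p : ℤ) ^ m₀ * N) = (q : ℤ) ^ m * c * ((p : ℤ) ^ k * N) := by
      have h0' : (q : ℤ) ^ k * a * (p : ℤ) ^ m₀ = (p : ℤ) ^ k * (q : ℤ) ^ m * c := by
        exact_mod_cast h0
      linear_combination (N : ℤ) * h0'
    apply mul_right_cancel₀ hNZ
    linear_combination h1
  rcases lt_trichotomy m k with hmk | hmk | hmk
  · -- m < k : q ∣ c * p^k, contradiction
    exfalso
    obtain ⟨d, rfl⟩ : ∃ d, k = m + 1 + d := ⟨k - m - 1, by omega⟩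
    have h4 : (q : ℤ) ^ m * (c * (p : ℤ) ^ (m + 1 + d))
        = (q : ℤ) ^ m * ((q : ℤ) * ((q : ℤ) ^ d * a * (p : ℤ) ^ m₀)) := by
      linear_combination -hkey
    have h5 := mul_left_cancel₀ (pow_ne_zero m hqZ) h4
    exact hqc (q_dvd_cancel hcop ⟨_, h5⟩)
  · -- m = k
    subst hmk
    obtain ⟨s, rfl⟩ : ∃ s, m = s + m₀ := ⟨m - m₀, by omega⟩
    have h5 : (q : ℤ) ^ (s + m₀) * (a * (p : ℤ) ^ m₀)
        = (q : ℤ) ^ (s + m₀) * ((c * (p : ℤ) ^ s) * (p : ℤ) ^ m₀) := by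
      linear_combination hkey
    have h4 := mul_left_cancel₀ (pow_ne_zero _ hqZ) h5
    have h6 := mul_right_cancel₀ (pow_ne_zero m₀ hpZ) h4
    intro hNc
    exact haN (h6 ▸ (hNc.mul_right _))
  · -- m > k : q ∣ a * p^m₀, so N ∣ a, contradiction
    exfalso
    obtain ⟨d, rfl⟩ : ∃ d, m = k + 1 + d := ⟨m - k - 1, by omega⟩
    have h4 : (q : ℤ) ^ k * (a * (p : ℤ) ^ m₀)
        = (q : ℤ) ^ k * ((q : ℤ) * ((q : ℤ) ^ d * c * (p : ℤ) ^ k)) := by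
      linear_combination hkey
    have h5 := mul_left_cancel₀ (pow_ne_zero k hqZ) h4
    exact haN (dvd_trans hNqZ (q_dvd_cancel hcop ⟨_, h5⟩))
end

section
/- Let ρ = p/q with gcd(p,q) = 1 and N ∣ q, and let Λ be a bi-zero set of μ_{ρ,N}. With m₀ as in the structure lemma and Q = { q^m a : m ≥ 0, a ∈ ℤ, N ∤ a }, we have (Λ−Λ)\{0} ⊆ ρ^{-m₀} N^{-1} Q ⊆ Z(μ̂_{ρ,N}). -/
open Set

/-!
Clearing denominators in the structure lemma gives `p^m₀ N (λ - λ') = q^m₀ t`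
with `t ∈ ℤ`. Writing `λ - λ' = (q/p)^k b / N` with `N ∤ b` turns this into
`p^m₀ q^k b = q^m₀ p^k t` in `ℤ`. If `k < m₀`, cancelling gives
`p^(m₀-k) b = q^(m₀-k) t`, so `N ∣ q` and `gcd(N, p) = 1` force `N ∣ b`; hence
`k ≥ m₀`, and then `gcd(p, q) = 1` gives `p^(k-m₀) ∣ b`, which is exactly
membership in `ρ^(-m₀) N⁻¹ Q`.
-/

section CoprimePowers

variable {R : Type*} [CommRing R] [IsDomain R] {p q N b t : R} {j k : ℕ}

theorem le_of_pow_mul_eq_pow_mul (hp : p ≠ 0) (hq : q ≠ 0) (hNq : N ∣ q)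
    (hNp : IsCoprime N p) (hNb : ¬ N ∣ b) (h : p ^ j * q ^ k * b = q ^ j * p ^ k * t) :
    j ≤ k := by
  by_contra! hkj
  obtain ⟨d, rfl⟩ := Nat.exists_eq_add_of_lt hkj
  have hcancel : p ^ (d + 1) * b = q ^ (d + 1) * t := by
    refine mul_left_cancel₀ (pow_ne_zero k (mul_ne_zero hp hq)) ?_
    linear_combination h
  have hN : N ∣ p ^ (d + 1) * b :=
    hcancel ▸ (hNq.trans (dvd_pow_self q d.succ_ne_zero)).mul_right t
  exact hNb (hNp.pow_right.dvd_of_dvd_mul_left hN)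

theorem pow_dvd_of_pow_mul_eq_pow_mul {d : ℕ} (hp : p ≠ 0) (hq : q ≠ 0) (hpq : IsCoprime p q)
    (h : p ^ j * q ^ (j + d) * b = q ^ j * p ^ (j + d) * t) : p ^ d ∣ b := by
  have hcancel : q ^ d * b = p ^ d * t := by
    refine mul_left_cancel₀ (pow_ne_zero j (mul_ne_zero hp hq)) ?_
    linear_combination h
  exact hpq.pow.dvd_of_dvd_mul_left ⟨t, hcancel⟩

end CoprimePowers

section ZeroSet

variable {p q N : ℕ} {m₀ : ℕ}

theorem exists_int_pow_mul_eq_of_le (hp : p ≠ 0) (hN : N ≠ 0) {m : ℕ} (hm : m₀ ≤ m)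
    (c : ℤ) : ∃ t : ℤ,
      (p : ℝ) ^ m₀ * N * ((q : ℝ) ^ m * c / ((p : ℝ) ^ m₀ * N)) = (q : ℝ) ^ m₀ * t := by
  obtain ⟨e, rfl⟩ := Nat.exists_eq_add_of_le hm
  refine ⟨(q : ℤ) ^ e * c, ?_⟩
  push_cast
  field_simp
  ring

theorem exists_pow_mul_of_mem_Zset (hp : p ≠ 0) (hq : q ≠ 0) (hN : N ≠ 0) (hNq : N ∣ q)
    (hpq : Nat.Coprime p q) {x : ℝ} (hx : x ∈ Zset ((p : ℝ) / q) N) {t : ℤ}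
    (ht : (p : ℝ) ^ m₀ * N * x = (q : ℝ) ^ m₀ * t) :
    ∃ (m : ℕ) (a : ℤ), ¬ (N : ℤ) ∣ a ∧
      x = (((p : ℝ) / q) ^ m₀)⁻¹ * (N : ℝ)⁻¹ * ((q : ℝ) ^ m * a) := by
  obtain ⟨k, -, b, hNb, rfl⟩ := hx
  have hpqZ : IsCoprime (p : ℤ) q := Nat.isCoprime_iff_coprime.mpr hpq
  have hpZ : (p : ℤ) ≠ 0 := by exact_mod_cast hp
  have hqZ : (q : ℤ) ≠ 0 := by exact_mod_cast hq
  have hZ : (p : ℤ) ^ m₀ * q ^ k * b = q ^ m₀ * p ^ k * t := by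
    have hR : (p : ℝ) ^ m₀ * q ^ k * b = q ^ m₀ * p ^ k * t := by
      rw [div_pow, inv_div] at ht
      field_simp at ht
      linear_combination ht
    exact_mod_cast hR
  have hNqZ : (N : ℤ) ∣ q := Int.natCast_dvd_natCast.mpr hNq
  obtain ⟨d, rfl⟩ := Nat.exists_eq_add_of_le
    (le_of_pow_mul_eq_pow_mul hpZ hqZ hNqZ (hpqZ.of_isCoprime_of_dvd_right hNqZ).symm hNb hZ)
  obtain ⟨a, rfl⟩ := pow_dvd_of_pow_mul_eq_pow_mul hpZ hqZ hpqZ hZ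
  refine ⟨d, a, fun h => hNb (h.mul_left _), ?_⟩
  push_cast
  simp only [div_pow, inv_div]
  field_simp
  ring

theorem inv_pow_mul_inv_mul_pow_mul_mem_Zset (hp : p ≠ 0) (hN : N ≠ 0)
    (hNq : N ∣ q) (hpq : Nat.Coprime p q) (hm₀ : 1 ≤ m₀) (m : ℕ) {a : ℤ}
    (hNa : ¬ (N : ℤ) ∣ a) :
    (((p : ℝ) / q) ^ m₀)⁻¹ * (N : ℝ)⁻¹ * ((q : ℝ) ^ m * a) ∈ Zset ((p : ℝ) / q) N := by
  have hNqZ : (N : ℤ) ∣ q := Int.natCast_dvd_natCast.mpr hNq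
  have hNp : IsCoprime (N : ℤ) p :=
    ((Nat.isCoprime_iff_coprime.mpr hpq).of_isCoprime_of_dvd_right hNqZ).symm
  refine ⟨m₀ + m, by omega, (p : ℤ) ^ m * a,
    fun h => hNa (hNp.pow_right.dvd_of_dvd_mul_left h), ?_⟩
  push_cast
  simp only [div_pow, inv_div]
  field_simp
  ring

end ZeroSet

theorem stmt_14 (p q : ℕ) (hp : 0 < p) (hpq : p < q) (hcop : Nat.Coprime p q)
    (N : ℕ) (hN : 1 < N) (hNq : N ∣ q) (ρ : ℝ) (hρ : ρ = (p : ℝ) / q)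
    (Λ : Set ℝ) (hbz : IsBiZero ρ N Λ) (m₀ : ℕ) (hm₀ : 1 ≤ m₀)
    (hstruct : ∀ l ∈ Λ, l ≠ 0 → ∃ (m : ℕ) (c : ℤ), m₀ ≤ m ∧ ¬ (N : ℤ) ∣ c ∧
      l = (q : ℝ) ^ m * (c : ℝ) / ((p : ℝ) ^ m₀ * N)) :
    (∀ x, (∃ l ∈ Λ, ∃ l' ∈ Λ, l ≠ l' ∧ x = l - l') →
        x ∈ (fun y => (ρ ^ m₀)⁻¹ * (N : ℝ)⁻¹ * y) ''
          {y : ℝ | ∃ (m : ℕ) (a : ℤ), ¬ (N : ℤ) ∣ a ∧ y = (q : ℝ) ^ m * a}) ∧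
    ((fun y => (ρ ^ m₀)⁻¹ * (N : ℝ)⁻¹ * y) ''
        {y : ℝ | ∃ (m : ℕ) (a : ℤ), ¬ (N : ℤ) ∣ a ∧ y = (q : ℝ) ^ m * a}
      ⊆ Zset ρ N) := by
  subst hρ
  have hp0 : p ≠ 0 := hp.ne'
  have hq0 : q ≠ 0 := by omega
  have hN0 : N ≠ 0 := by omega
  have hΛ : ∀ l ∈ Λ, ∃ t : ℤ, (p : ℝ) ^ m₀ * N * l = (q : ℝ) ^ m₀ * t := by
    intro l hl
    rcases eq_or_ne l 0 with rfl | hl0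
    · exact ⟨0, by simp⟩
    obtain ⟨m, c, hm, -, rfl⟩ := hstruct l hl hl0
    exact exists_int_pow_mul_eq_of_le hp0 hN0 hm c
  refine ⟨?_, ?_⟩
  · rintro x ⟨l, hl, l', hl', hne, rfl⟩
    obtain ⟨t, ht⟩ := hΛ l hl
    obtain ⟨t', ht'⟩ := hΛ l' hl'
    obtain ⟨m, a, hNa, hx⟩ := exists_pow_mul_of_mem_Zset hp0 hq0 hN0 hNq hcop
      (hbz.2 l hl l' hl' hne) (t := t - t') (by push_cast; linear_combination ht - ht')
    exact ⟨_, ⟨m, a, hNa, rfl⟩, hx.symm⟩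
  · rintro x ⟨y, ⟨m, a, hNa, rfl⟩, rfl⟩
    exact inv_pow_mul_inv_mul_pow_mul_mem_Zset hp0 hN0 hNq hcop hm₀ m hNa
end
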